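/- arXiv:1901.08987 — 5 statements merged into one kernel-verified Lean document; each statement's English description precedes it below -/
import Mathlib

section
/- Let μ ∈ ℝ, Σ > 0, and 0 ≤ C ≤ 1. Let Z₁, Z₂ be independent standard Gaussian random variables and set X = Σ·Z₁ + μ and Y = Σ·(C·Z₁ + √(1−C²)·Z₂) + μ, so that (X,Y) is a bivariate Gaussian vector with mean (μ,μ) and covariance matrix Σ²·[[1,C],[C,1]]. If g : ℝ → ℝ is an odd measurable function such that g(X)·g(Y) is integrable, then E[g(X)·g(Y)] ≥ 0. -/
open MeasureTheory ProbabilityTheory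
open scoped ENNReal NNReal

lemma map_withDensity_equiv {α β : Type*} [MeasurableSpace α] [MeasurableSpace β]
    (e : α ≃ᵐ β) (μ : Measure α) {D : β → ℝ≥0∞} (hD : Measurable D) :
    Measure.map e (μ.withDensity (fun x => D (e x))) = (Measure.map e μ).withDensity D := by
  ext s hs
  rw [Measure.map_apply e.measurable hs, withDensity_apply _ hs,
    withDensity_apply _ (e.measurable hs), setLIntegral_map hs hD e.measurable]

lemma gauss_prod_eq :
    (gaussianReal 0 1).prod (gaussianReal 0 1)
      = (volume : Measure (ℝ × ℝ)).withDensity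
          (fun p => gaussianPDF 0 1 p.1 * gaussianPDF 0 1 p.2) := by
  have h1 : (1 : NNReal) ≠ 0 := one_ne_zero
  refine Measure.prod_eq fun s t hs ht => ?_
  rw [withDensity_apply _ (hs.prod ht), Measure.volume_eq_prod,
    ← Measure.prod_restrict,
    lintegral_prod_mul (measurable_gaussianPDF 0 1).aemeasurable
      (measurable_gaussianPDF 0 1).aemeasurable,
    gaussianReal_apply 0 h1 s, gaussianReal_apply 0 h1 t]

lemma gaussPDF_rot {a b : ℝ} (hab : a ^ 2 + b ^ 2 = 1) (p : ℝ × ℝ) :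
    gaussianPDF 0 1 (a * p.1 + b * p.2) * gaussianPDF 0 1 (-b * p.1 + a * p.2)
      = gaussianPDF 0 1 p.1 * gaussianPDF 0 1 p.2 := by
  simp only [gaussianPDF]
  rw [← ENNReal.ofReal_mul (gaussianPDFReal_nonneg _ _ _),
    ← ENNReal.ofReal_mul (gaussianPDFReal_nonneg _ _ _)]
  congr 1
  simp only [gaussianPDFReal, NNReal.coe_one, mul_one, sub_zero]
  rw [mul_mul_mul_comm, ← Real.exp_add, mul_mul_mul_comm, ← Real.exp_add]
  congr 1
  rw [Real.exp_eq_exp]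
  have key : (a * p.1 + b * p.2) ^ 2 + (-b * p.1 + a * p.2) ^ 2 = p.1 ^ 2 + p.2 ^ 2 := by
    linear_combination (p.1 ^ 2 + p.2 ^ 2) * hab
  linarith [key]

/-- The rotation as a measurable equivalence. -/
noncomputable def rotEquiv (a b : ℝ) (hab : a ^ 2 + b ^ 2 = 1) : (ℝ × ℝ) ≃ᵐ (ℝ × ℝ) :=
  (Homeomorph.toMeasurableEquiv
    { toFun := fun p => (a * p.1 + b * p.2, -b * p.1 + a * p.2)
      invFun := fun p => (a * p.1 - b * p.2, b * p.1 + a * p.2)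
      left_inv := by
        intro p
        refine Prod.ext ?_ ?_ <;> simp only
        · linear_combination p.1 * hab
        · linear_combination p.2 * hab
      right_inv := by
        intro p
        refine Prod.ext ?_ ?_ <;> simp only
        · linear_combination p.1 * hab
        · linear_combination p.2 * hab
      continuous_toFun := by fun_prop
      continuous_invFun := by fun_prop })

lemma rot_map_volume {a b : ℝ} (hab : a ^ 2 + b ^ 2 = 1) :
    Measure.map (fun p : ℝ × ℝ => (a * p.1 + b * p.2, -b * p.1 + a * p.2))
      (volume : Measure (ℝ × ℝ)) = volume := by
  set T := Matrix.toLin (Module.Basis.finTwoProd ℝ) (Module.Basis.finTwoProd ℝ) !![a, b; -b, a] with hT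
  have hTapp : (fun p : ℝ × ℝ => (a * p.1 + b * p.2, -b * p.1 + a * p.2)) = ⇑T := by
    funext p
    rw [hT, Matrix.toLin_finTwoProd_apply]
  have hdet : LinearMap.det T = 1 := by
    rw [hT, LinearMap.det_toLin, Matrix.det_fin_two_of]
    linear_combination hab
  rw [hTapp, Measure.map_linearMap_addHaar_eq_smul_addHaar _ (by rw [hdet]; norm_num), hdet]
  norm_num

lemma rot_measurePreserving {a b : ℝ} (hab : a ^ 2 + b ^ 2 = 1) :
    MeasurePreserving (fun p : ℝ × ℝ => (a * p.1 + b * p.2, -b * p.1 + a * p.2))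
      ((gaussianReal 0 1).prod (gaussianReal 0 1))
      ((gaussianReal 0 1).prod (gaussianReal 0 1)) := by
  have hmeas : Measurable (fun p : ℝ × ℝ => (a * p.1 + b * p.2, -b * p.1 + a * p.2)) := by
    fun_prop
  refine ⟨hmeas, ?_⟩
  have hD : Measurable (fun p : ℝ × ℝ => gaussianPDF 0 1 p.1 * gaussianPDF 0 1 p.2) :=
    ((measurable_gaussianPDF 0 1).comp measurable_fst).mul
      ((measurable_gaussianPDF 0 1).comp measurable_snd)
  have hcoe : (fun p : ℝ × ℝ => (a * p.1 + b * p.2, -b * p.1 + a * p.2))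
      = ⇑(rotEquiv a b hab) := rfl
  have hcomp : (fun x : ℝ × ℝ =>
        (fun p : ℝ × ℝ => gaussianPDF 0 1 p.1 * gaussianPDF 0 1 p.2) (rotEquiv a b hab x))
      = fun p : ℝ × ℝ => gaussianPDF 0 1 p.1 * gaussianPDF 0 1 p.2 := by
    funext p
    exact gaussPDF_rot hab p
  have h1 : (volume : Measure (ℝ × ℝ)).withDensity
        (fun p => gaussianPDF 0 1 p.1 * gaussianPDF 0 1 p.2)
      = volume.withDensity (fun x =>
          (fun p : ℝ × ℝ => gaussianPDF 0 1 p.1 * gaussianPDF 0 1 p.2) (rotEquiv a b hab x)) := by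
    rw [hcomp]
  have h2 : Measure.map (⇑(rotEquiv a b hab)) (volume : Measure (ℝ × ℝ)) = volume := by
    rw [← hcoe]; exact rot_map_volume hab
  rw [gauss_prod_eq, hcoe, h1, map_withDensity_equiv (rotEquiv a b hab) volume hD, h2, hcomp]

lemma proj_map_gauss {a b : ℝ} (hab : a ^ 2 + b ^ 2 = 1) :
    Measure.map (fun p : ℝ × ℝ => a * p.1 + b * p.2)
      ((gaussianReal 0 1).prod (gaussianReal 0 1)) = gaussianReal 0 1 := by
  have h := (rot_measurePreserving hab).map_eq
  have : (fun p : ℝ × ℝ => a * p.1 + b * p.2)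
      = Prod.fst ∘ (fun p : ℝ × ℝ => (a * p.1 + b * p.2, -b * p.1 + a * p.2)) := rfl
  rw [this, ← Measure.map_map measurable_fst (rot_measurePreserving hab).measurable, h,
    Measure.map_fst_prod]
  simp

/-- If `(X, Y)` is a bivariate Gaussian pair with equal means `μ`, equal variances `S²` and
correlation `C ∈ [0,1]`, realized by the Cholesky coupling `X = S Z₁ + μ`,
`Y = S (C Z₁ + √(1-C²) Z₂) + μ` from independent standard Gaussians `Z₁, Z₂`, then for any odd
measurable `g` with `g(X) g(Y)` integrable, `E[g(X) g(Y)] ≥ 0`. -/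
theorem gaussian_pair_odd_correlation_nonneg (μ S C : ℝ) (hS : 0 < S)
    (hC0 : 0 ≤ C) (hC1 : C ≤ 1) (g : ℝ → ℝ) (hg : Measurable g)
    (hodd : ∀ x : ℝ, g (-x) = - g x)
    (hint : Integrable
      (fun z : ℝ × ℝ => g (S * z.1 + μ) *
        g (S * (C * z.1 + Real.sqrt (1 - C^2) * z.2) + μ))
      ((gaussianReal 0 1).prod (gaussianReal 0 1))) :
    0 ≤ ∫ z : ℝ × ℝ,
        g (S * z.1 + μ) * g (S * (C * z.1 + Real.sqrt (1 - C^2) * z.2) + μ)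
        ∂((gaussianReal 0 1).prod (gaussianReal 0 1)) := by
  by_cases hC : C = 1
  · subst hC
    refine integral_nonneg fun z => ?_
    have h0 : Real.sqrt (1 - 1 ^ 2) = 0 := by norm_num
    rw [h0]
    have harg : S * (1 * z.1 + 0 * z.2) + μ = S * z.1 + μ := by ring
    rw [harg]
    exact mul_self_nonneg _
  · have hC1' : C < 1 := lt_of_le_of_ne hC1 hC
    set γ := gaussianReal 0 1 with hγdef
    set a := Real.sqrt C with ha
    set b := Real.sqrt (1 - C) with hb
    set s := Real.sqrt (1 - C ^ 2) with hs
    have ha2 : a ^ 2 = C := Real.sq_sqrt hC0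
    have hb2 : b ^ 2 = 1 - C := Real.sq_sqrt (by linarith)
    have hs2 : s ^ 2 = 1 - C ^ 2 := Real.sq_sqrt (by nlinarith)
    have hspos : 0 < s := by
      rw [hs]
      exact Real.sqrt_pos.2 (by nlinarith)
    set α := -(a * b) / s with hα
    set β := b / s with hβ
    have hab : a ^ 2 + b ^ 2 = 1 := by rw [ha2, hb2]; ring
    have hαβ : α ^ 2 + β ^ 2 = 1 := by
      rw [hα, hβ]
      field_simp
      nlinarith [ha2, hb2, hs2]
    have hsα : s * α = -(a * b) := by
      rw [hα]
      field_simp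
    have hsβ : s * β = b := by
      rw [hβ]
      field_simp
    set G : ℝ × ℝ → ℝ :=
      fun z => g (S * z.1 + μ) * g (S * (C * z.1 + s * z.2) + μ) with hG
    have hGmeas : Measurable G := by
      refine Measurable.mul (hg.comp ?_) (hg.comp ?_) <;> fun_prop
    have hGae : AEStronglyMeasurable G (γ.prod γ) := hGmeas.aestronglyMeasurable
    set Φ : (ℝ × ℝ) × ℝ → ℝ × ℝ :=
      fun q => (a * q.1.1 + b * q.1.2, α * (-b * q.1.1 + a * q.1.2) + β * q.2) with hΦdef
    have hrot := rot_measurePreserving hab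
    have hproj : MeasurePreserving (fun p : ℝ × ℝ => α * p.1 + β * p.2) (γ.prod γ) γ :=
      ⟨by fun_prop, proj_map_gauss hαβ⟩
    have hΦ : MeasurePreserving Φ ((γ.prod γ).prod γ) (γ.prod γ) := by
      have h1 : MeasurePreserving
          (Prod.map (fun p : ℝ × ℝ => (a * p.1 + b * p.2, -b * p.1 + a * p.2)) (id : ℝ → ℝ))
          ((γ.prod γ).prod γ) ((γ.prod γ).prod γ) := hrot.prod (MeasurePreserving.id γ)
      have h2 := MeasureTheory.measurePreserving_prodAssoc γ γ γ
      have h3 : MeasurePreserving (Prod.map (id : ℝ → ℝ) (fun p : ℝ × ℝ => α * p.1 + β * p.2))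
          (γ.prod (γ.prod γ)) (γ.prod γ) := (MeasurePreserving.id γ).prod hproj
      exact ((h3.comp h2).comp h1 : _)
    have hcompint : Integrable (G ∘ Φ) ((γ.prod γ).prod γ) :=
      (hΦ.integrable_comp hGae).2 hint
    have hfun : ∀ q : (ℝ × ℝ) × ℝ, G (Φ q)
        = g (S * (a * q.1.1 + b * q.1.2) + μ) * g (S * (a * q.1.1 + b * q.2) + μ) := by
      intro q
      have harg : C * (a * q.1.1 + b * q.1.2) + s * (α * (-b * q.1.1 + a * q.1.2) + β * q.2)
          = a * q.1.1 + b * q.2 := by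
        have e1 : s * (α * (-b * q.1.1 + a * q.1.2) + β * q.2)
            = (s * α) * (-b * q.1.1 + a * q.1.2) + (s * β) * q.2 := by ring
        rw [e1, hsα, hsβ]
        linear_combination (a * q.1.1) * hb2 - (b * q.1.2) * ha2
      simp only [hG, hΦdef]
      rw [harg]
    have hFint : Integrable (fun q : (ℝ × ℝ) × ℝ =>
        g (S * (a * q.1.1 + b * q.1.2) + μ) * g (S * (a * q.1.1 + b * q.2) + μ))
        ((γ.prod γ).prod γ) := hcompint.congr (Filter.Eventually.of_forall hfun)
    have key : ∫ z, G z ∂(γ.prod γ)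
        = ∫ q, g (S * (a * q.1.1 + b * q.1.2) + μ) * g (S * (a * q.1.1 + b * q.2) + μ)
            ∂((γ.prod γ).prod γ) := by
      conv_lhs => rw [← hΦ.map_eq]
      rw [integral_map hΦ.measurable.aemeasurable (hΦ.map_eq.symm ▸ hGae)]
      exact integral_congr_ae (Filter.Eventually.of_forall hfun)
    rw [key, integral_prod _ hFint]
    simp_rw [integral_const_mul]
    have hI2 : Integrable (fun x : ℝ × ℝ =>
        g (S * (a * x.1 + b * x.2) + μ) * ∫ v, g (S * (a * x.1 + b * v) + μ) ∂γ)
        (γ.prod γ) := by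
      have h := hFint.integral_prod_left
      simp_rw [integral_const_mul] at h
      exact h
    rw [integral_prod _ hI2]
    simp_rw [integral_mul_const]
    exact integral_nonneg fun u => mul_self_nonneg _
end

section
/- Fix α > 0, μ ∈ ℝ, and 0 ≤ C ≤ 1, and for x, y ∈ ℝ define q(x,y) = (x−μ)² − 2C(x−μ)(y−μ) + (y−μ)² and p(x,y) = exp(−α·q(x,y)). Then for all a, b ≥ 0, p(a,b) + p(−a,−b) ≥ p(a,−b) + p(−a,b). -/
private lemma exp_pair_le (u v s t : ℝ) (h1 : u ≤ s) (h2 : v ≤ s) (h3 : u + v ≤ s + t) :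
    Real.exp u + Real.exp v ≤ Real.exp s + Real.exp t := by
  rcases le_total v t with h | hvt
  · exact add_le_add (Real.exp_le_exp.2 h1) (Real.exp_le_exp.2 h)
  rcases le_total u t with h' | hut
  · rw [add_comm (Real.exp s)]
    exact add_le_add (Real.exp_le_exp.2 h') (Real.exp_le_exp.2 h2)
  have key : Real.exp t * (Real.exp (v - t) - 1) ≤ Real.exp u * (Real.exp (v - t) - 1) :=
    mul_le_mul_of_nonneg_right (Real.exp_le_exp.2 hut)
      (sub_nonneg.2 (Real.one_le_exp (sub_nonneg.2 hvt)))
  have e1 : Real.exp t * (Real.exp (v - t) - 1) = Real.exp v - Real.exp t := by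
    rw [mul_sub, ← Real.exp_add, mul_one]; ring_nf
  have e2 : Real.exp u * (Real.exp (v - t) - 1) = Real.exp (u + v - t) - Real.exp u := by
    rw [mul_sub, ← Real.exp_add, mul_one]; ring_nf
  have e3 : Real.exp (u + v - t) ≤ Real.exp s := Real.exp_le_exp.2 (by linarith)
  rw [e1, e2] at key
  linarith

/-- The quadratic form of a bivariate Gaussian with mean `(μ, μ)`, equal variances and
correlation `C`. -/
noncomputable def bivQuad (μ C x y : ℝ) : ℝ :=
  (x - μ)^2 - 2 * C * (x - μ) * (y - μ) + (y - μ)^2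

/-- The (unnormalized) bivariate Gaussian density. -/
noncomputable def bivDens (α μ C x y : ℝ) : ℝ := Real.exp (-α * bivQuad μ C x y)

/-- For a bivariate Gaussian density with nonnegative correlation `C ∈ [0,1]`, the sum of the
density at `(a,b)` and `(-a,-b)` dominates the sum at `(a,-b)` and `(-a,b)`, for `a, b ≥ 0`. -/
theorem bivDens_orthant_ineq (α μ C : ℝ) (hα : 0 < α) (hC0 : 0 ≤ C) (hC1 : C ≤ 1)
    (a b : ℝ) (ha : 0 ≤ a) (hb : 0 ≤ b) :
    bivDens α μ C a (-b) + bivDens α μ C (-a) b ≤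
      bivDens α μ C a b + bivDens α μ C (-a) (-b) := by
  rcases le_total 0 ((1 - C) * μ) with hm | hm
  · unfold bivDens bivQuad
    apply exp_pair_le
    · nlinarith [mul_nonneg hα.le (mul_nonneg hb (add_nonneg hm (mul_nonneg hC0 ha)))]
    · nlinarith [mul_nonneg hα.le (mul_nonneg ha (add_nonneg hm (mul_nonneg hC0 hb)))]
    · nlinarith [mul_nonneg hα.le (mul_nonneg hC0 (mul_nonneg ha hb))]
  · rw [add_comm (bivDens α μ C a b)]
    unfold bivDens bivQuad
    apply exp_pair_le
    · nlinarith [mul_nonneg hα.le (mul_nonneg ha (sub_nonneg.2 (hm.trans (mul_nonneg hC0 hb))))]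
    · nlinarith [mul_nonneg hα.le (mul_nonneg hb (sub_nonneg.2 (hm.trans (mul_nonneg hC0 ha))))]
    · nlinarith [mul_nonneg hα.le (mul_nonneg hC0 (mul_nonneg ha hb))]
end

section
/- Let μ ∈ ℝ and Σ > 0, let Z₁, Z₂ be independent standard Gaussian random variables, and for C ∈ (−1,1) set U_a = Σ·Z₁ + μ and U_b(C) = Σ·(C·Z₁ + √(1−C²)·Z₂) + μ. If g₁, g₂ : ℝ → ℝ are continuously differentiable with g₁, g₂, g₁', g₂' all bounded, then the function F(C) = E[g₁(U_a)·g₂(U_b(C))] is differentiable on (−1,1) and F'(C) = Σ²·E[g₁'(U_a)·g₂'(U_b(C))]. -/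
open MeasureTheory ProbabilityTheory Real Filter Set
open scoped ENNReal NNReal

noncomputable section

namespace PriceAux

/-- standard gaussian measure -/
abbrev γ : Measure ℝ := gaussianReal 0 1

/-- standard gaussian density -/
def φ (x : ℝ) : ℝ := (Real.sqrt (2 * π))⁻¹ * Real.exp (-x ^ 2 / 2)

lemma φ_nonneg (x : ℝ) : 0 ≤ φ x := by
  unfold φ; positivity

lemma phi_eq : gaussianPDFReal 0 1 = φ := by
  funext x
  simp only [gaussianPDFReal, φ, NNReal.coe_one, mul_one, sub_zero]

lemma measurable_φ : Measurable φ := by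
  rw [← phi_eq]; exact measurable_gaussianPDFReal 0 1

lemma γ_eq : γ = volume.withDensity fun x => ((Real.toNNReal (φ x) : ℝ≥0) : ℝ≥0∞) := by
  rw [show (γ : Measure ℝ) = gaussianReal 0 1 from rfl, gaussianReal_of_var_ne_zero _ one_ne_zero]
  congr 1
  funext x
  rw [gaussianPDF, phi_eq, ENNReal.ofReal]

lemma integral_γ (g : ℝ → ℝ) : ∫ x, g x ∂γ = ∫ x, φ x * g x := by
  rw [γ_eq, integral_withDensity_eq_integral_smul (measurable_φ.real_toNNReal) g]
  congr 1; funext x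
  rw [NNReal.smul_def, Real.coe_toNNReal _ (φ_nonneg x), smul_eq_mul]

lemma integrable_γ_iff {g : ℝ → ℝ} : Integrable g γ ↔ Integrable (fun x => φ x * g x) volume := by
  rw [γ_eq]
  refine Iff.trans
    (integrable_withDensity_iff_integrable_smul (μ := volume)
      (f := fun x => Real.toNNReal (φ x)) (measurable_φ.real_toNNReal) (g := g))
    (integrable_congr (Eventually.of_forall fun x => ?_))
  show (φ x).toNNReal • g x = φ x * g x
  rw [NNReal.smul_def, Real.coe_toNNReal _ (φ_nonneg x), smul_eq_mul]

lemma integrable_φ : Integrable φ := by rw [← phi_eq]; exact integrable_gaussianPDFReal 0 1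

/-- key pointwise inequality -/
lemma abs_mul_exp_le (v : ℝ) : |v| * Real.exp (-v ^ 2 / 2) ≤ Real.exp (-v ^ 2 / 4) := by
  have h1 : |v| ≤ Real.exp (v ^ 2 / 4) := by
    have h2 : |v| ≤ v ^ 2 / 4 + 1 := by nlinarith [sq_abs v, sq_nonneg (|v| - 2)]
    exact h2.trans (by linarith [Real.add_one_le_exp (v ^ 2 / 4)])
  calc |v| * Real.exp (-v ^ 2 / 2) ≤ Real.exp (v ^ 2 / 4) * Real.exp (-v ^ 2 / 2) :=
        mul_le_mul_of_nonneg_right h1 (Real.exp_nonneg _)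
    _ = Real.exp (-v ^ 2 / 4) := by rw [← Real.exp_add]; ring_nf

lemma integrable_abs_mul_exp : Integrable (fun x : ℝ => |x| * Real.exp (-x ^ 2 / 2)) := by
  have h := (integrable_mul_exp_neg_mul_sq (b := (1:ℝ)/2) (by norm_num)).abs
  refine h.congr (Eventually.of_forall fun x => ?_)
  show |x * rexp (-(1/2) * x ^ 2)| = |x| * rexp (-x ^ 2 / 2)
  rw [abs_mul, Real.abs_exp]
  ring_nf

lemma integrable_abs_γ : Integrable (fun x : ℝ => |x|) γ := by
  rw [integrable_γ_iff]
  refine (integrable_abs_mul_exp.const_mul ((Real.sqrt (2 * π))⁻¹)).congr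
    (Eventually.of_forall fun x => ?_)
  unfold φ; ring

lemma integrable_γ_of_le {g : ℝ → ℝ} (hg : AEStronglyMeasurable g γ) {A B : ℝ}
    (h : ∀ x, |g x| ≤ A + B * |x|) : Integrable g γ := by
  refine Integrable.mono' ((integrable_const A).add (integrable_abs_γ.const_mul B)) hg
    (Eventually.of_forall fun x => ?_)
  rw [Real.norm_eq_abs]; exact h x

lemma integrable_abs_fst : Integrable (fun z : ℝ × ℝ => |z.1|) (γ.prod γ) := by
  have hmap : (γ.prod γ).map Prod.fst = γ := by
    rw [Measure.map_fst_prod]; simp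
  have := (integrable_map_measure (f := (Prod.fst : ℝ × ℝ → ℝ)) (g := fun x : ℝ => |x|)
    (by rw [hmap]; exact (continuous_abs.aestronglyMeasurable)) measurable_fst.aemeasurable).mp
    (by rw [hmap]; exact integrable_abs_γ)
  exact this

lemma integrable_abs_snd : Integrable (fun z : ℝ × ℝ => |z.2|) (γ.prod γ) := by
  have hmap : (γ.prod γ).map Prod.snd = γ := by
    rw [Measure.map_snd_prod]; simp
  exact (integrable_map_measure (f := (Prod.snd : ℝ × ℝ → ℝ)) (g := fun x : ℝ => |x|)
    (by rw [hmap]; exact (continuous_abs.aestronglyMeasurable)) measurable_snd.aemeasurable).mp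
    (by rw [hmap]; exact integrable_abs_γ)

lemma integrable_prod_of_le {f : ℝ × ℝ → ℝ} (hf : AEStronglyMeasurable f (γ.prod γ))
    {A B D : ℝ} (h : ∀ z, |f z| ≤ A + B * |z.1| + D * |z.2|) : Integrable f (γ.prod γ) := by
  refine Integrable.mono'
    (((integrable_const A).add (integrable_abs_fst.const_mul B)).add
      (integrable_abs_snd.const_mul D)) hf (Eventually.of_forall fun z => ?_)
  rw [Real.norm_eq_abs]; exact h z



lemma integrable_exp_div (a : ℝ) {c : ℝ} (hc : 0 < c) :
    Integrable (fun t : ℝ => Real.exp (-(t - a) ^ 2 / c)) := by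
  have h : Integrable (fun t : ℝ => Real.exp (-(1/c) * t ^ 2)) volume :=
    integrable_exp_neg_mul_sq (one_div_pos.mpr hc)
  refine (h.comp_sub_right a).congr (Eventually.of_forall fun t => ?_)
  show Real.exp (-(1/c) * (t - a) ^ 2) = Real.exp (-(t - a) ^ 2 / c)
  congr 1; ring

lemma hasDerivAt_neg_sq_half (t a : ℝ) :
    HasDerivAt (fun a : ℝ => -(t - a) ^ 2 / 2) (t - a) a := by
  have h : HasDerivAt (fun a : ℝ => t - a) (0 - 1) a :=
    (hasDerivAt_const a t).sub (hasDerivAt_id a)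
  have h2 := ((h.pow 2).neg).div_const 2
  refine h2.congr_deriv ?_
  ring

lemma hasDerivAt_kernel (t a : ℝ) :
    HasDerivAt (fun a : ℝ => Real.exp (-(t - a) ^ 2 / 2))
      ((t - a) * Real.exp (-(t - a) ^ 2 / 2)) a := by
  have := (hasDerivAt_neg_sq_half t a).exp
  convert this using 1
  ring

/-- H5 : differentiating a gaussian-kernel integral in the shift parameter. -/
lemma hasDerivAt_P {f : ℝ → ℝ} (hf : Continuous f) {M : ℝ} (hM : ∀ x, |f x| ≤ M) (a₀ : ℝ) :
    HasDerivAt (fun a => ∫ t, f t * Real.exp (-(t - a) ^ 2 / 2))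
      (∫ t, f t * ((t - a₀) * Real.exp (-(t - a₀) ^ 2 / 2))) a₀ := by
  have hM0 : 0 ≤ M := (abs_nonneg _).trans (hM 0)
  set bound : ℝ → ℝ := fun t => M * Real.exp 4⁻¹ * Real.exp (-(1/8) * (t - a₀) ^ 2) with hbound
  have key : ∀ (a t : ℝ), a ∈ Metric.ball a₀ 1 →
      |f t * ((t - a) * Real.exp (-(t - a) ^ 2 / 2))| ≤ bound t := by
    intro a t ha
    have h1 : |f t * ((t - a) * Real.exp (-(t - a) ^ 2 / 2))|
        ≤ M * Real.exp (-(t - a) ^ 2 / 4) := by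
      rw [abs_mul]
      have h2 : |(t - a) * Real.exp (-(t - a) ^ 2 / 2)| ≤ Real.exp (-(t - a) ^ 2 / 4) := by
        rw [abs_mul, Real.abs_exp]
        exact abs_mul_exp_le (t - a)
      exact mul_le_mul (hM t) h2 (abs_nonneg _) hM0
    refine h1.trans ?_
    show M * Real.exp (-(t - a) ^ 2 / 4) ≤ M * Real.exp 4⁻¹ * Real.exp (-(1/8) * (t - a₀) ^ 2)
    rw [mul_assoc, ← Real.exp_add]
    have ha' : (a - a₀) ^ 2 ≤ 1 := by
      have := mem_ball_iff_norm.mp ha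
      rw [Real.norm_eq_abs] at this
      nlinarith [abs_nonneg (a - a₀), sq_abs (a - a₀)]
    have : -(t - a) ^ 2 / 4 ≤ 4⁻¹ + -(1/8) * (t - a₀) ^ 2 := by
      nlinarith [sq_nonneg ((t - a) - (a - a₀))]
    exact mul_le_mul_of_nonneg_left (Real.exp_le_exp.mpr this) hM0
  have hbi : Integrable bound := by
    have h : Integrable (fun t : ℝ => Real.exp (-(1/8) * t ^ 2)) volume :=
      integrable_exp_neg_mul_sq (by norm_num)
    exact (h.comp_sub_right a₀).const_mul _
  have hFc : ∀ a : ℝ, Continuous fun t => f t * Real.exp (-(t - a) ^ 2 / 2) := fun a =>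
    hf.mul (((continuous_id.sub continuous_const).pow 2).neg.div_const 2).rexp
  have hF'c : Continuous fun t => f t * ((t - a₀) * Real.exp (-(t - a₀) ^ 2 / 2)) :=
    hf.mul ((continuous_id.sub continuous_const).mul
      (((continuous_id.sub continuous_const).pow 2).neg.div_const 2).rexp)
  refine (hasDerivAt_integral_of_dominated_loc_of_deriv_le (μ := volume)
    (F' := fun a t => f t * ((t - a) * Real.exp (-(t - a) ^ 2 / 2))) (Metric.ball_mem_nhds a₀ one_pos)
    (Eventually.of_forall fun a => (hFc a).aestronglyMeasurable)
    ?_ hF'c.aestronglyMeasurable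
    (Eventually.of_forall fun t => fun a ha => ?_) hbi
    (Eventually.of_forall fun t => fun a _ => ?_)).2
  · refine Integrable.mono' (integrable_exp_div a₀ two_pos |>.const_mul M)
      (hFc a₀).aestronglyMeasurable (Eventually.of_forall fun t => ?_)
    rw [Real.norm_eq_abs, abs_mul, Real.abs_exp]
    exact mul_le_mul_of_nonneg_right (hM t) (Real.exp_nonneg _)
  · rw [Real.norm_eq_abs]; exact key a t ha
  · exact (hasDerivAt_kernel t a).const_mul (f t)

lemma smoothed_eq {f : ℝ → ℝ} (d : ℝ) {b : ℝ} (hb : 0 < b) (x : ℝ) :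
    ∫ y, f (d * x + b * y) ∂γ
      = (Real.sqrt (2 * π))⁻¹ * ∫ t, f (b * t) * Real.exp (-(t - d * x / b) ^ 2 / 2) := by
  rw [integral_γ]
  rw [show (∫ t, f (b * t) * Real.exp (-(t - d * x / b) ^ 2 / 2))
      = ∫ t, f (b * (t + d * x / b)) * Real.exp (-(t + d * x / b - d * x / b) ^ 2 / 2) from
    (integral_add_right_eq_self (fun t => f (b * t) * Real.exp (-(t - d * x / b) ^ 2 / 2))
      (d * x / b)).symm]
  rw [← integral_const_mul]
  congr 1; funext y
  have hb' : b ≠ 0 := ne_of_gt hb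
  have harg : b * (y + d * x / b) = d * x + b * y := by field_simp; ring
  rw [harg]
  have : y + d * x / b - d * x / b = y := by ring
  rw [this]
  unfold φ; ring

lemma smoothed_k_eq {f : ℝ → ℝ} (d : ℝ) {b : ℝ} (hb : 0 < b) (x : ℝ) :
    ∫ y, y * f (d * x + b * y) ∂γ
      = (Real.sqrt (2 * π))⁻¹
        * ∫ t, f (b * t) * ((t - d * x / b) * Real.exp (-(t - d * x / b) ^ 2 / 2)) := by
  rw [integral_γ]
  rw [show (∫ t, f (b * t) * ((t - d * x / b) * Real.exp (-(t - d * x / b) ^ 2 / 2)))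
      = ∫ t, f (b * (t + d * x / b))
          * ((t + d * x / b - d * x / b) * Real.exp (-(t + d * x / b - d * x / b) ^ 2 / 2)) from
    (integral_add_right_eq_self
      (fun t => f (b * t) * ((t - d * x / b) * Real.exp (-(t - d * x / b) ^ 2 / 2)))
      (d * x / b)).symm]
  rw [← integral_const_mul]
  congr 1; funext y
  have hb' : b ≠ 0 := ne_of_gt hb
  have harg : b * (y + d * x / b) = d * x + b * y := by field_simp; ring
  rw [harg]
  have : y + d * x / b - d * x / b = y := by ring
  rw [this]
  unfold φ; ring

/-- H6 : derivative of the gaussian smoothing in the location parameter. -/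
lemma hasDerivAt_smoothed {f : ℝ → ℝ} (hf : Continuous f) {M : ℝ} (hM : ∀ x, |f x| ≤ M)
    (d : ℝ) {b : ℝ} (hb : 0 < b) (x : ℝ) :
    HasDerivAt (fun x => ∫ y, f (d * x + b * y) ∂γ)
      ((d / b) * ∫ y, y * f (d * x + b * y) ∂γ) x := by
  have heq : (fun x => ∫ y, f (d * x + b * y) ∂γ)
      = fun x => (Real.sqrt (2 * π))⁻¹
          * ∫ t, f (b * t) * Real.exp (-(t - d * x / b) ^ 2 / 2) := by
    funext x; exact smoothed_eq d hb x
  rw [heq]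
  have hfb : Continuous fun t => f (b * t) := hf.comp (continuous_const.mul continuous_id)
  have hMb : ∀ t, |f (b * t)| ≤ M := fun t => hM _
  have hP := hasDerivAt_P hfb hMb (d * x / b)
  have hinner : HasDerivAt (fun y : ℝ => d * y / b) (d / b) x := by
    simpa using ((hasDerivAt_id x).const_mul d).div_const b
  have hcomp := (hP.comp x hinner).const_mul (Real.sqrt (2 * π))⁻¹
  refine hcomp.congr_deriv ?_
  rw [smoothed_k_eq d hb x]
  ring

lemma continuous_smoothed_k {f : ℝ → ℝ} (hf : Continuous f) {M : ℝ} (hM : ∀ x, |f x| ≤ M)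
    (d b : ℝ) : Continuous fun x => ∫ y, y * f (d * x + b * y) ∂γ := by
  rw [continuous_iff_continuousAt]
  intro x₀
  have hc : ∀ x : ℝ, Continuous fun y : ℝ => y * f (d * x + b * y) := fun x =>
    continuous_id.mul (hf.comp (continuous_const.add (continuous_const.mul continuous_id)))
  refine continuousAt_of_dominated
    (Eventually.of_forall fun x => (hc x).aestronglyMeasurable)
    (Eventually.of_forall fun x => Eventually.of_forall fun y => ?_)
    (integrable_abs_γ.const_mul M) (Eventually.of_forall fun y => ?_)
  · rw [Real.norm_eq_abs, abs_mul]
    calc |y| * |f (d * x + b * y)| ≤ |y| * M :=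
          mul_le_mul_of_nonneg_left (hM _) (abs_nonneg _)
      _ = M * |y| := mul_comm _ _
  · exact (continuous_const.mul
      (hf.comp ((continuous_const.mul continuous_id).add continuous_const))).continuousAt

lemma tendsto_φ_atTop : Tendsto φ atTop (nhds 0) := by
  have h1 : Tendsto (fun x : ℝ => -x ^ 2 / 2) atTop atBot := by
    apply Tendsto.atBot_div_const two_pos
    exact tendsto_neg_atBot_iff.mpr (tendsto_pow_atTop two_ne_zero)
  have h2 : Tendsto (fun x : ℝ => Real.exp (-x ^ 2 / 2)) atTop (nhds 0) :=
    Real.tendsto_exp_atBot.comp h1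
  have h3 := h2.const_mul (Real.sqrt (2 * π))⁻¹
  rw [mul_zero] at h3
  exact h3.congr fun x => rfl

lemma tendsto_φ_atBot : Tendsto φ atBot (nhds 0) := by
  have h := tendsto_φ_atTop.comp tendsto_abs_atBot_atTop
  refine h.congr fun x => ?_
  simp only [Function.comp, φ, sq_abs]

lemma hasDerivAt_φ (x : ℝ) : HasDerivAt φ (-(x * φ x)) x := by
  have h := ((hasDerivAt_neg_sq_half 0 x).exp).const_mul (Real.sqrt (2 * π))⁻¹
  have heq : (fun a : ℝ => (Real.sqrt (2 * π))⁻¹ * Real.exp (-(0 - a) ^ 2 / 2)) = φ := by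
    funext a; unfold φ; ring_nf
  rw [heq] at h
  refine h.congr_deriv ?_
  unfold φ; ring

/-- Gaussian integration by parts. -/
lemma gaussian_ibp {ψ ψ' : ℝ → ℝ} (hd : ∀ x, HasDerivAt ψ (ψ' x) x) (hc' : Continuous ψ')
    {M M' : ℝ} (hM : ∀ x, |ψ x| ≤ M) (hM' : ∀ x, |ψ' x| ≤ M') :
    ∫ x, x * ψ x ∂γ = ∫ x, ψ' x ∂γ := by
  have hM0 : 0 ≤ M := (abs_nonneg _).trans (hM 0)
  have hM'0 : 0 ≤ M' := (abs_nonneg _).trans (hM' 0)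
  have hψc : Continuous ψ :=
    Differentiable.continuous fun x => (hd x).differentiableAt
  set Φ : ℝ → ℝ := fun x => ψ x * φ x with hΦ
  set Φ' : ℝ → ℝ := fun x => ψ' x * φ x - x * (ψ x * φ x) with hΦ'
  have hφc : Continuous φ := Differentiable.continuous fun x => (hasDerivAt_φ x).differentiableAt
  have hΦd : ∀ x, HasDerivAt Φ (Φ' x) x := by
    intro x
    have h := (hd x).mul (hasDerivAt_φ x)
    refine h.congr_deriv ?_
    simp only [hΦ']; ring
  have hΦtop : Tendsto Φ atTop (nhds 0) := by
    refine squeeze_zero_norm (fun x => ?_) (by simpa using tendsto_φ_atTop.const_mul M)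
    rw [Real.norm_eq_abs, hΦ, abs_mul, abs_of_nonneg (φ_nonneg x)]
    exact mul_le_mul_of_nonneg_right (hM x) (φ_nonneg x)
  have hΦbot : Tendsto Φ atBot (nhds 0) := by
    refine squeeze_zero_norm (fun x => ?_) (by simpa using tendsto_φ_atBot.const_mul M)
    rw [Real.norm_eq_abs, hΦ, abs_mul, abs_of_nonneg (φ_nonneg x)]
    exact mul_le_mul_of_nonneg_right (hM x) (φ_nonneg x)
  -- integrability of the two pieces
  have habs : ∀ x : ℝ, |x| * φ x ≤ (Real.sqrt (2 * π))⁻¹ * Real.exp (-x ^ 2 / 4) := by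
    intro x
    have h := abs_mul_exp_le x
    unfold φ
    calc |x| * ((Real.sqrt (2 * π))⁻¹ * Real.exp (-x ^ 2 / 2))
        = (Real.sqrt (2 * π))⁻¹ * (|x| * Real.exp (-x ^ 2 / 2)) := by ring
      _ ≤ (Real.sqrt (2 * π))⁻¹ * Real.exp (-x ^ 2 / 4) := by
          exact mul_le_mul_of_nonneg_left h (by positivity)
  have hint1 : Integrable (fun x => ψ' x * φ x) volume := by
    refine Integrable.mono' (integrable_φ.const_mul M') ((hc'.mul hφc).aestronglyMeasurable)
      (Eventually.of_forall fun x => ?_)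
    rw [Real.norm_eq_abs, abs_mul, abs_of_nonneg (φ_nonneg x)]
    exact mul_le_mul_of_nonneg_right (hM' x) (φ_nonneg x)
  have hb4 : Integrable (fun x : ℝ => Real.exp (-x ^ 2 / 4)) volume := by
    have := integrable_exp_div 0 (show (0:ℝ) < 4 by norm_num)
    simpa using this
  have hint2 : Integrable (fun x => x * (ψ x * φ x)) volume := by
    refine Integrable.mono' (hb4.const_mul (M * (Real.sqrt (2 * π))⁻¹))
      ((continuous_id.mul (hψc.mul hφc)).aestronglyMeasurable)
      (Eventually.of_forall fun x => ?_)
    rw [Real.norm_eq_abs, abs_mul, abs_mul, abs_of_nonneg (φ_nonneg x)]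
    calc |x| * (|ψ x| * φ x) = |ψ x| * (|x| * φ x) := by ring
      _ ≤ M * ((Real.sqrt (2 * π))⁻¹ * Real.exp (-x ^ 2 / 4)) :=
          mul_le_mul (hM x) (habs x) (mul_nonneg (abs_nonneg _) (φ_nonneg _)) hM0
      _ = M * (Real.sqrt (2 * π))⁻¹ * Real.exp (-x ^ 2 / 4) := by ring
  have hintΦ' : Integrable Φ' volume := hint1.sub hint2
  -- FTC on both half lines
  have h1 : ∫ x in Ioi (0:ℝ), Φ' x = 0 - Φ 0 :=
    integral_Ioi_of_hasDerivAt_of_tendsto' (fun x _ => hΦd x) hintΦ'.integrableOn hΦtop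
  have h2 : ∫ x in Iic (0:ℝ), Φ' x = Φ 0 - 0 :=
    integral_Iic_of_hasDerivAt_of_tendsto' (fun x _ => hΦd x) hintΦ'.integrableOn hΦbot
  have h3 : ∫ x, Φ' x = 0 := by
    rw [← integral_add_compl (measurableSet_Iic (a := (0:ℝ))) hintΦ', compl_Iic, h1, h2]
    ring
  have h4 : ∫ x, ψ' x * φ x = ∫ x, x * (ψ x * φ x) := by
    have h5 := integral_sub hint1 hint2
    have h6 : ∫ x, (ψ' x * φ x - x * (ψ x * φ x)) = 0 := h3
    rw [h6] at h5
    linarith [h5]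
  rw [integral_γ, integral_γ]
  calc ∫ x, φ x * (x * ψ x) = ∫ x, x * (ψ x * φ x) := by
        congr 1; funext x; ring
    _ = ∫ x, ψ' x * φ x := h4.symm
    _ = ∫ x, φ x * ψ' x := by congr 1; funext x; ring

end PriceAux
end

open PriceAux

/-- For the Cholesky coupling `U_a = S Z₁ + μ`, `U_b(C) = S (C Z₁ + √(1-C²) Z₂) + μ` of a
bivariate Gaussian pair with correlation `C`, and bounded `C¹` functions `g₁, g₂` with bounded
derivatives, the map `C ↦ E[g₁(U_a) g₂(U_b(C))]` is differentiable on `(-1,1)` with derivative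
`S² E[g₁'(U_a) g₂'(U_b(C))]`. -/
theorem hasDerivAt_gaussian_pair_correlation (μ S : ℝ) (hS : 0 < S)
    (g₁ g₂ : ℝ → ℝ) (hg₁ : ContDiff ℝ 1 g₁) (hg₂ : ContDiff ℝ 1 g₂)
    (hb₁ : ∃ M : ℝ, ∀ x : ℝ, |g₁ x| ≤ M) (hb₂ : ∃ M : ℝ, ∀ x : ℝ, |g₂ x| ≤ M)
    (hb₁' : ∃ M : ℝ, ∀ x : ℝ, |deriv g₁ x| ≤ M) (hb₂' : ∃ M : ℝ, ∀ x : ℝ, |deriv g₂ x| ≤ M) :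
    ∀ C ∈ Set.Ioo (-1 : ℝ) 1,
      HasDerivAt
        (fun C' : ℝ => ∫ z : ℝ × ℝ,
          g₁ (S * z.1 + μ) * g₂ (S * (C' * z.1 + Real.sqrt (1 - C'^2) * z.2) + μ)
          ∂((gaussianReal 0 1).prod (gaussianReal 0 1)))
        (S^2 * ∫ z : ℝ × ℝ,
          deriv g₁ (S * z.1 + μ) *
            deriv g₂ (S * (C * z.1 + Real.sqrt (1 - C^2) * z.2) + μ)
          ∂((gaussianReal 0 1).prod (gaussianReal 0 1)))
        C := by
  intro C hC
  obtain ⟨M₁, hM₁⟩ := hb₁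
  obtain ⟨M₂, hM₂⟩ := hb₂
  obtain ⟨M₁', hM₁'⟩ := hb₁'
  obtain ⟨M₂', hM₂'⟩ := hb₂'
  have hM₁0 : 0 ≤ M₁ := (abs_nonneg _).trans (hM₁ 0)
  have hM₂0 : 0 ≤ M₂ := (abs_nonneg _).trans (hM₂ 0)
  have hM₁'0 : 0 ≤ M₁' := (abs_nonneg _).trans (hM₁' 0)
  have hM₂'0 : 0 ≤ M₂' := (abs_nonneg _).trans (hM₂' 0)
  have cg1 : Continuous g₁ := hg₁.continuous
  have cg2 : Continuous g₂ := hg₂.continuous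
  have cg1' : Continuous (deriv g₁) := hg₁.continuous_deriv le_rfl
  have cg2' : Continuous (deriv g₂) := hg₂.continuous_deriv le_rfl
  have hCabs : |C| < 1 := abs_lt.mpr ⟨hC.1, hC.2⟩
  have hC2 : 0 < 1 - C^2 := by nlinarith [sq_abs C, abs_nonneg C]
  set s : ℝ := Real.sqrt (1 - C^2) with hs_def
  have hs : 0 < s := Real.sqrt_pos.mpr hC2
  set d : ℝ := S * C with hd_def
  set b : ℝ := S * s with hb_def
  have hb : 0 < b := mul_pos hS hs
  have hdb : d / b = C / s := by
    rw [hd_def, hb_def, mul_div_mul_left _ _ (ne_of_gt hS)]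
  -- the bounded continuous function we smooth
  set f : ℝ → ℝ := fun u => deriv g₂ (u + μ) with hf_def
  have cf : Continuous f := cg2'.comp (continuous_id.add continuous_const)
  have hMf : ∀ u, |f u| ≤ M₂' := fun u => hM₂' _
  set h : ℝ → ℝ := fun x => ∫ y, f (d * x + b * y) ∂γ with hh_def
  set k : ℝ → ℝ := fun x => ∫ y, y * f (d * x + b * y) ∂γ with hk_def
  have hh_deriv : ∀ x, HasDerivAt h ((d / b) * k x) x := fun x =>
    hasDerivAt_smoothed cf hMf d hb x
  have hh_cont : Continuous h := Differentiable.continuous fun x =>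
    (hh_deriv x).differentiableAt
  have hk_cont : Continuous k := continuous_smoothed_k cf hMf d b
  have hh_bd : ∀ x, |h x| ≤ M₂' := by
    intro x
    rw [hh_def, ← Real.norm_eq_abs]
    refine (norm_integral_le_of_norm_le (integrable_const M₂')
      (Eventually.of_forall fun y => by rw [Real.norm_eq_abs]; exact hMf _)).trans ?_
    simp
  have hk_bd : ∀ x, |k x| ≤ M₂' * ∫ y, |y| ∂γ := by
    intro x
    rw [hk_def, ← Real.norm_eq_abs]
    refine le_trans (norm_integral_le_of_norm_le (integrable_abs_γ.const_mul M₂')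
      (Eventually.of_forall fun y => ?_)) ?_
    · rw [Real.norm_eq_abs, abs_mul]
      calc |y| * |f (d * x + b * y)| ≤ |y| * M₂' :=
            mul_le_mul_of_nonneg_left (hMf _) (abs_nonneg _)
        _ = M₂' * |y| := mul_comm _ _
    · rw [integral_const_mul]
  have hk_bd' : ∀ x, |k x| ≤ M₂' * |∫ y, |y| ∂γ| := by
    intro x
    refine (hk_bd x).trans (mul_le_mul_of_nonneg_left (le_abs_self _) hM₂'0)
  -- ################ STEP A : differentiate under the integral sign
  set ε : ℝ := (1 - |C|) / 2 with hε_def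
  have hε : 0 < ε := by rw [hε_def]; linarith
  set r : ℝ := (1 + |C|) / 2 with hr_def
  have hr1 : r < 1 := by rw [hr_def]; linarith
  have hr0 : 0 ≤ r := by rw [hr_def]; positivity
  have hball : ∀ C' ∈ Metric.ball C ε, |C'| ≤ r := by
    intro C' hC'
    have h1 : |C' - C| < ε := by rwa [Metric.mem_ball, Real.dist_eq] at hC'
    have h2 : |C'| ≤ |C| + |C' - C| := by
      calc |C'| = |C + (C' - C)| := by ring_nf
        _ ≤ |C| + |C' - C| := abs_add_le _ _
    rw [hr_def]; rw [hε_def] at h1; linarith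
  have hr2 : 0 < 1 - r^2 := by nlinarith
  set σ : ℝ := Real.sqrt (1 - r^2) with hσ_def
  have hσ : 0 < σ := Real.sqrt_pos.mpr hr2
  have hsqrt_lb : ∀ C' : ℝ, |C'| ≤ r → σ ≤ Real.sqrt (1 - C'^2) := by
    intro C' h1
    apply Real.sqrt_le_sqrt
    nlinarith [sq_abs C', abs_nonneg C',
      mul_nonneg (sub_nonneg.mpr h1) (by positivity : (0:ℝ) ≤ r + |C'|)]
  have hpos' : ∀ C' : ℝ, |C'| ≤ r → 0 < 1 - C'^2 := by
    intro C' h1; nlinarith [sq_abs C', abs_nonneg C']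
  set F' : ℝ → ℝ × ℝ → ℝ := fun C' z =>
    g₁ (S * z.1 + μ) * (deriv g₂ (S * (C' * z.1 + Real.sqrt (1 - C'^2) * z.2) + μ)
      * (S * (z.1 - C' / Real.sqrt (1 - C'^2) * z.2))) with hF'_def
  have contF : ∀ C' : ℝ, Continuous fun z : ℝ × ℝ =>
      g₁ (S * z.1 + μ) * g₂ (S * (C' * z.1 + Real.sqrt (1 - C'^2) * z.2) + μ) := by
    intro C'
    exact (cg1.comp ((continuous_const.mul continuous_fst).add continuous_const)).mul
      (cg2.comp ((continuous_const.mul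
        ((continuous_const.mul continuous_fst).add
          (continuous_const.mul continuous_snd))).add continuous_const))
  have contF' : ∀ C' : ℝ, Continuous (F' C') := by
    intro C'
    exact (cg1.comp ((continuous_const.mul continuous_fst).add continuous_const)).mul
      ((cg2'.comp ((continuous_const.mul
        ((continuous_const.mul continuous_fst).add
          (continuous_const.mul continuous_snd))).add continuous_const)).mul
        (continuous_const.mul
          (continuous_fst.sub (continuous_const.mul continuous_snd))))
  set bound : ℝ × ℝ → ℝ := fun z =>
    (M₁ * M₂' * S) * |z.1| + (M₁ * M₂' * S * (r / σ)) * |z.2| with hbound_def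
  have hbound_int : Integrable bound (γ.prod γ) :=
    (integrable_abs_fst.const_mul _).add (integrable_abs_snd.const_mul _)
  have hF_int : Integrable (fun z : ℝ × ℝ =>
      g₁ (S * z.1 + μ) * g₂ (S * (C * z.1 + Real.sqrt (1 - C^2) * z.2) + μ)) (γ.prod γ) := by
    refine Integrable.mono' (integrable_const (M₁ * M₂)) (contF C).aestronglyMeasurable
      (Eventually.of_forall fun z => ?_)
    rw [Real.norm_eq_abs, abs_mul]
    exact mul_le_mul (hM₁ _) (hM₂ _) (abs_nonneg _) hM₁0
  have h_bound : ∀ᵐ z ∂(γ.prod γ), ∀ C' ∈ Metric.ball C ε, ‖F' C' z‖ ≤ bound z := by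
    refine Eventually.of_forall fun z => fun C' hC' => ?_
    have h1 : |C'| ≤ r := hball C' hC'
    have h3 : σ ≤ Real.sqrt (1 - C'^2) := hsqrt_lb C' h1
    have h4 : 0 < Real.sqrt (1 - C'^2) := lt_of_lt_of_le hσ h3
    have h5 : |C' / Real.sqrt (1 - C'^2)| ≤ r / σ := by
      rw [abs_div, abs_of_pos h4]
      exact div_le_div₀ hr0 h1 hσ h3
    have h6 : |z.1 - C' / Real.sqrt (1 - C'^2) * z.2| ≤ |z.1| + (r / σ) * |z.2| := by
      calc |z.1 - C' / Real.sqrt (1 - C'^2) * z.2|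
          = |z.1 + -(C' / Real.sqrt (1 - C'^2) * z.2)| := by rw [sub_eq_add_neg]
        _ ≤ |z.1| + |-(C' / Real.sqrt (1 - C'^2) * z.2)| := abs_add_le _ _
        _ = |z.1| + |C' / Real.sqrt (1 - C'^2)| * |z.2| := by rw [abs_neg, abs_mul]
        _ ≤ |z.1| + (r / σ) * |z.2| := by
            have := mul_le_mul_of_nonneg_right h5 (abs_nonneg z.2)
            linarith
    have h7 : |S * (z.1 - C' / Real.sqrt (1 - C'^2) * z.2)|
        ≤ S * (|z.1| + (r / σ) * |z.2|) := by
      rw [abs_mul, abs_of_pos hS]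
      exact mul_le_mul_of_nonneg_left h6 hS.le
    rw [Real.norm_eq_abs, hF'_def]
    calc |g₁ (S * z.1 + μ) * (deriv g₂ (S * (C' * z.1 + Real.sqrt (1 - C'^2) * z.2) + μ)
        * (S * (z.1 - C' / Real.sqrt (1 - C'^2) * z.2)))|
        = |g₁ (S * z.1 + μ)| * (|deriv g₂ (S * (C' * z.1 + Real.sqrt (1 - C'^2) * z.2) + μ)|
            * |S * (z.1 - C' / Real.sqrt (1 - C'^2) * z.2)|) := by
          rw [abs_mul, abs_mul]
      _ ≤ M₁ * (M₂' * (S * (|z.1| + (r / σ) * |z.2|))) := by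
          refine mul_le_mul (hM₁ _) ?_ (mul_nonneg (abs_nonneg _) (abs_nonneg _)) hM₁0
          exact mul_le_mul (hM₂' _) h7 (abs_nonneg _) hM₂'0
      _ = bound z := by rw [hbound_def]; ring
  have h_diff : ∀ᵐ z ∂(γ.prod γ), ∀ C' ∈ Metric.ball C ε,
      HasDerivAt (fun C'' : ℝ =>
        g₁ (S * z.1 + μ) * g₂ (S * (C'' * z.1 + Real.sqrt (1 - C''^2) * z.2) + μ))
        (F' C' z) C' := by
    refine Eventually.of_forall fun z => fun C' hC' => ?_
    have h1 : |C'| ≤ r := hball C' hC'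
    have h2 : 0 < 1 - C'^2 := hpos' C' h1
    have h4 : 0 < Real.sqrt (1 - C'^2) := Real.sqrt_pos.mpr h2
    have hinner : HasDerivAt (fun x : ℝ => 1 - x^2) (-(2 * C')) C' := by
      have h0 := (hasDerivAt_pow 2 C').const_sub 1
      refine h0.congr_deriv ?_
      push_cast
      ring
    have hsq : HasDerivAt (fun x : ℝ => Real.sqrt (1 - x^2))
        (-(2 * C') / (2 * Real.sqrt (1 - C'^2))) C' := hinner.sqrt (ne_of_gt h2)
    have hA0 := ((((hasDerivAt_id C').mul_const z.1).add (hsq.mul_const z.2)).const_mul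
      S).add_const μ
    have hg2A : HasDerivAt g₂
        (deriv g₂ (S * (C' * z.1 + Real.sqrt (1 - C'^2) * z.2) + μ))
        (S * (C' * z.1 + Real.sqrt (1 - C'^2) * z.2) + μ) :=
      ((hg₂.differentiable one_ne_zero) _).hasDerivAt
    have hcomp := (hg2A.comp C' hA0).const_mul (g₁ (S * z.1 + μ))
    refine hcomp.congr_deriv ?_
    rw [hF'_def]
    field_simp
    ring
  have key := (hasDerivAt_integral_of_dominated_loc_of_deriv_le (μ := γ.prod γ)
    (F := fun C' (z : ℝ × ℝ) => g₁ (S * z.1 + μ)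
      * g₂ (S * (C' * z.1 + Real.sqrt (1 - C'^2) * z.2) + μ))
    (F' := F') (bound := bound) (Metric.ball_mem_nhds C hε)
    (Eventually.of_forall fun C' => (contF C').aestronglyMeasurable)
    hF_int (contF' C).aestronglyMeasurable h_bound hbound_int h_diff).2
  -- ################ STEP B : identify the derivative
  have harg : ∀ z : ℝ × ℝ, S * (C * z.1 + s * z.2) + μ = d * z.1 + b * z.2 + μ := by
    intro z; rw [hd_def, hb_def]; ring
  set G : ℝ × ℝ → ℝ := fun z => g₁ (S * z.1 + μ) * f (d * z.1 + b * z.2) with hG_def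
  have hG_bd : ∀ z, |G z| ≤ M₁ * M₂' := by
    intro z
    rw [hG_def, abs_mul]
    exact mul_le_mul (hM₁ _) (hMf _) (abs_nonneg _) hM₁0
  have contG : Continuous G :=
    (cg1.comp ((continuous_const.mul continuous_fst).add continuous_const)).mul
      (cf.comp ((continuous_const.mul continuous_fst).add
        (continuous_const.mul continuous_snd)))
  have I1 : Integrable (fun z : ℝ × ℝ => z.1 * G z) (γ.prod γ) := by
    refine integrable_prod_of_le ((continuous_fst.mul contG).aestronglyMeasurable)
      (A := 0) (B := M₁ * M₂') (D := 0) fun z => ?_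
    rw [abs_mul]
    calc |z.1| * |G z| ≤ |z.1| * (M₁ * M₂') :=
          mul_le_mul_of_nonneg_left (hG_bd z) (abs_nonneg _)
      _ = 0 + M₁ * M₂' * |z.1| + 0 * |z.2| := by ring
  have I2 : Integrable (fun z : ℝ × ℝ => z.2 * G z) (γ.prod γ) := by
    refine integrable_prod_of_le ((continuous_snd.mul contG).aestronglyMeasurable)
      (A := 0) (B := 0) (D := M₁ * M₂') fun z => ?_
    rw [abs_mul]
    calc |z.2| * |G z| ≤ |z.2| * (M₁ * M₂') :=
          mul_le_mul_of_nonneg_left (hG_bd z) (abs_nonneg _)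
      _ = 0 + 0 * |z.1| + M₁ * M₂' * |z.2| := by ring
  have I3 : Integrable (fun z : ℝ × ℝ => deriv g₁ (S * z.1 + μ) * f (d * z.1 + b * z.2))
      (γ.prod γ) := by
    refine integrable_prod_of_le
      (((cg1'.comp ((continuous_const.mul continuous_fst).add continuous_const)).mul
        (cf.comp ((continuous_const.mul continuous_fst).add
          (continuous_const.mul continuous_snd)))).aestronglyMeasurable)
      (A := M₁' * M₂') (B := 0) (D := 0) fun z => ?_
    rw [abs_mul]
    calc |deriv g₁ (S * z.1 + μ)| * |f (d * z.1 + b * z.2)| ≤ M₁' * M₂' :=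
          mul_le_mul (hM₁' _) (hMf _) (abs_nonneg _) hM₁'0
      _ = M₁' * M₂' + 0 * |z.1| + 0 * |z.2| := by ring
  -- Fubini for the three product integrals
  have fub1 : ∫ z : ℝ × ℝ, z.1 * G z ∂(γ.prod γ)
      = ∫ x, x * (g₁ (S * x + μ) * h x) ∂γ := by
    rw [integral_prod _ I1]
    congr 1; funext x
    rw [show (fun y => (x, y).1 * G (x, y))
        = fun y => (x * g₁ (S * x + μ)) * f (d * x + b * y) from by
      funext y; rw [hG_def]; ring]
    rw [integral_const_mul, hh_def]
    ring
  have fub2 : ∫ z : ℝ × ℝ, z.2 * G z ∂(γ.prod γ)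
      = ∫ x, g₁ (S * x + μ) * k x ∂γ := by
    rw [integral_prod _ I2]
    congr 1; funext x
    rw [show (fun y => (x, y).2 * G (x, y))
        = fun y => g₁ (S * x + μ) * (y * f (d * x + b * y)) from by
      funext y; rw [hG_def]; ring]
    rw [integral_const_mul, hk_def]
  have fub3 : ∫ z : ℝ × ℝ, deriv g₁ (S * z.1 + μ) * f (d * z.1 + b * z.2) ∂(γ.prod γ)
      = ∫ x, deriv g₁ (S * x + μ) * h x ∂γ := by
    rw [integral_prod _ I3]
    congr 1; funext x
    rw [show (fun y => deriv g₁ (S * (x, y).1 + μ) * f (d * (x, y).1 + b * (x, y).2))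
        = fun y => deriv g₁ (S * x + μ) * f (d * x + b * y) from rfl]
    rw [integral_const_mul, hh_def]
  -- integration by parts
  set ψ : ℝ → ℝ := fun x => g₁ (S * x + μ) * h x with hψ_def
  set ψ' : ℝ → ℝ := fun x =>
    S * (deriv g₁ (S * x + μ) * h x) + (d / b) * (g₁ (S * x + μ) * k x) with hψ'_def
  have hψd : ∀ x, HasDerivAt ψ (ψ' x) x := by
    intro x
    have haff : HasDerivAt (fun x : ℝ => S * x + μ) S x := by
      simpa using ((hasDerivAt_id x).const_mul S).add_const μ
    have hg1A : HasDerivAt g₁ (deriv g₁ (S * x + μ)) (S * x + μ) :=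
      ((hg₁.differentiable one_ne_zero) _).hasDerivAt
    have h0 := (hg1A.comp x haff).mul (hh_deriv x)
    refine h0.congr_deriv ?_
    simp only [hψ'_def, Function.comp]
    ring
  have hψc' : Continuous ψ' := by
    rw [hψ'_def]
    exact (continuous_const.mul
      ((cg1'.comp ((continuous_const.mul continuous_id).add continuous_const)).mul
        hh_cont)).add (continuous_const.mul
      ((cg1.comp ((continuous_const.mul continuous_id).add continuous_const)).mul hk_cont))
  have hψbd : ∀ x, |ψ x| ≤ M₁ * M₂' := by
    intro x
    rw [hψ_def, abs_mul]
    exact mul_le_mul (hM₁ _) (hh_bd x) (abs_nonneg _) hM₁0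
  have hψbd' : ∀ x, |ψ' x|
      ≤ S * (M₁' * M₂') + |d / b| * (M₁ * (M₂' * |∫ y, |y| ∂γ|)) := by
    intro x
    rw [hψ'_def]
    refine (abs_add_le _ _).trans ?_
    have e1 : |S * (deriv g₁ (S * x + μ) * h x)| ≤ S * (M₁' * M₂') := by
      rw [abs_mul, abs_of_pos hS, abs_mul]
      exact mul_le_mul_of_nonneg_left
        (mul_le_mul (hM₁' _) (hh_bd x) (abs_nonneg _) hM₁'0) hS.le
    have e2 : |(d / b) * (g₁ (S * x + μ) * k x)|
        ≤ |d / b| * (M₁ * (M₂' * |∫ y, |y| ∂γ|)) := by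
      rw [abs_mul, abs_mul]
      refine mul_le_mul_of_nonneg_left ?_ (abs_nonneg _)
      refine mul_le_mul (hM₁ _) ?_ (abs_nonneg _) hM₁0
      refine (hk_bd' x).trans ?_
      exact le_refl _
    linarith
  have ibp : ∫ x, x * ψ x ∂γ = ∫ x, ψ' x ∂γ :=
    gaussian_ibp hψd hψc' hψbd hψbd'
  -- splitting ∫ ψ'
  have jint1 : Integrable (fun x => S * (deriv g₁ (S * x + μ) * h x)) γ := by
    refine integrable_γ_of_le ((continuous_const.mul
      ((cg1'.comp ((continuous_const.mul continuous_id).add continuous_const)).mul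
        hh_cont)).aestronglyMeasurable) (A := S * (M₁' * M₂')) (B := 0) fun x => ?_
    rw [abs_mul, abs_of_pos hS, abs_mul]
    have e1 : |deriv g₁ (S * x + μ)| * |h x| ≤ M₁' * M₂' :=
      mul_le_mul (hM₁' (S * x + μ)) (hh_bd x) (abs_nonneg _) hM₁'0
    have e2 := mul_le_mul_of_nonneg_left e1 hS.le
    linarith
  have jint2 : Integrable (fun x => (d / b) * (g₁ (S * x + μ) * k x)) γ := by
    refine integrable_γ_of_le ((continuous_const.mul
      ((cg1.comp ((continuous_const.mul continuous_id).add continuous_const)).mul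
        hk_cont)).aestronglyMeasurable)
      (A := |d / b| * (M₁ * (M₂' * |∫ y, |y| ∂γ|))) (B := 0) fun x => ?_
    rw [abs_mul, abs_mul]
    have e3 : |g₁ (S * x + μ)| * |k x| ≤ M₁ * (M₂' * |∫ y, |y| ∂γ|) :=
      mul_le_mul (hM₁ (S * x + μ)) ((hk_bd' x).trans (by
        exact mul_le_mul_of_nonneg_left (le_refl _) hM₂'0)) (abs_nonneg _) hM₁0
    have e4 := mul_le_mul_of_nonneg_left e3 (abs_nonneg (d / b))
    linarith
  have split : ∫ x, ψ' x ∂γ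
      = S * (∫ x, deriv g₁ (S * x + μ) * h x ∂γ)
        + (d / b) * ∫ x, g₁ (S * x + μ) * k x ∂γ := by
    simp only [hψ'_def]
    rw [integral_add jint1 jint2, integral_const_mul, integral_const_mul]
  -- the derivative integral equals the claimed value
  have heq : ∫ z : ℝ × ℝ, F' C z ∂(γ.prod γ)
      = S^2 * ∫ z : ℝ × ℝ, deriv g₁ (S * z.1 + μ)
          * deriv g₂ (S * (C * z.1 + Real.sqrt (1 - C^2) * z.2) + μ) ∂(γ.prod γ) := by
    have e0 : (fun z : ℝ × ℝ => F' C z)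
        = fun z : ℝ × ℝ => S * (z.1 * G z) - (S * (C / s)) * (z.2 * G z) := by
      funext z
      rw [hF'_def, hG_def, hf_def]
      have : d * z.1 + b * z.2 + μ = S * (C * z.1 + s * z.2) + μ := (harg z).symm
      simp only []
      rw [this]
      ring
    have e1 : (fun z : ℝ × ℝ => deriv g₁ (S * z.1 + μ)
        * deriv g₂ (S * (C * z.1 + Real.sqrt (1 - C^2) * z.2) + μ))
        = fun z : ℝ × ℝ => deriv g₁ (S * z.1 + μ) * f (d * z.1 + b * z.2) := by
      funext z
      rw [hf_def]
      simp only []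
      rw [harg z]
    rw [e0, e1]
    rw [integral_sub ((I1.const_mul S)) ((I2.const_mul (S * (C / s)))),
      integral_const_mul, integral_const_mul]
    rw [fub1, fub2, fub3]
    have : ∫ x, x * (g₁ (S * x + μ) * h x) ∂γ = ∫ x, x * ψ x ∂γ := rfl
    rw [this, ibp, split, hdb]
    ring
  rw [heq] at key
  exact key
end

section
/- Let μ ∈ ℝ and Σ > 0, let Z₁, Z₂ be independent standard Gaussian random variables, and for C ∈ (−1,1) set U_a = Σ·Z₁ + μ and U_b(C) = Σ·(C·Z₁ + √(1−C²)·Z₂) + μ. If g₁, g₂ : ℝ → ℝ are continuously differentiable with g₁, g₂, g₁', g₂' all bounded and with g₁' ≥ 0 and g₂' ≥ 0 everywhere, then the function F(C) = E[g₁(U_a)·g₂(U_b(C))] is monotone nondecreasing on (−1,1). -/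
open MeasureTheory ProbabilityTheory

open Real Filter Set
open scoped NNReal ENNReal

noncomputable def gpdf (x : ℝ) : ℝ := (Real.sqrt (2 * Real.pi))⁻¹ * Real.exp (-(1/2) * x ^ 2)

lemma gpdf_eq (x : ℝ) : gaussianPDFReal 0 1 x = gpdf x := by
  simp only [gaussianPDFReal, gpdf, NNReal.coe_one, mul_one, sub_zero]
  ring_nf

lemma gpdf_nonneg (x : ℝ) : 0 ≤ gpdf x := by
  have := gaussianPDFReal_nonneg 0 1 x
  rwa [gpdf_eq] at this

lemma gpdf_cont : Continuous gpdf := by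
  unfold gpdf
  continuity

lemma gaussianReal_eq_withDensity :
    gaussianReal 0 1 = volume.withDensity (fun x => ENNReal.ofReal (gpdf x)) := by
  rw [gaussianReal_of_var_ne_zero 0 one_ne_zero]
  congr 1
  ext x
  rw [gaussianPDF, gpdf_eq]

lemma integral_gaussianReal_eq (g : ℝ → ℝ) :
    ∫ x, g x ∂(gaussianReal 0 1) = ∫ x, gpdf x * g x := by
  rw [gaussianReal_eq_withDensity]
  have h1 : (fun x => ENNReal.ofReal (gpdf x)) = fun x => ((Real.toNNReal (gpdf x) : ℝ≥0) : ℝ≥0∞) := by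
    rfl
  rw [h1, integral_withDensity_eq_integral_smul (gpdf_cont.measurable.real_toNNReal)]
  congr 1
  ext x
  simp [NNReal.smul_def, Real.coe_toNNReal _ (gpdf_nonneg x)]


lemma integrable_exp_half : Integrable (fun x : ℝ => Real.exp (-(1/2) * x ^ 2)) volume :=
  integrable_exp_neg_mul_sq (by norm_num)

lemma integrable_abs_exp_half : Integrable (fun x : ℝ => |x| * Real.exp (-(1/2) * x ^ 2)) volume := by
  have h := (integrable_rpow_mul_exp_neg_mul_sq (b := 1/2) (by norm_num) (s := 1) (by norm_num)).abs
  refine h.congr (Filter.Eventually.of_forall fun x => ?_)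
  simp only [Real.rpow_one, abs_mul, abs_of_nonneg (Real.exp_pos _).le]

lemma integrable_affine_exp_half (a b : ℝ) :
    Integrable (fun x : ℝ => (a + b * |x|) * Real.exp (-(1/2) * x ^ 2)) volume := by
  have : (fun x : ℝ => (a + b * |x|) * Real.exp (-(1/2) * x ^ 2))
      = fun x => a * Real.exp (-(1/2) * x ^ 2) + b * (|x| * Real.exp (-(1/2) * x ^ 2)) := by
    funext x; ring
  rw [this]
  exact ((integrable_exp_half.const_mul a)).add ((integrable_abs_exp_half.const_mul b))

lemma integrable_gauss_of_le {r : ℝ → ℝ} (hr : AEStronglyMeasurable r volume)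
    {a b : ℝ} (h : ∀ x, |r x| ≤ a + b * |x|) : Integrable r (gaussianReal 0 1) := by
  rw [gaussianReal_eq_withDensity]
  rw [integrable_withDensity_iff (by exact gpdf_cont.measurable.ennreal_ofReal)
    (Filter.Eventually.of_forall fun x => ENNReal.ofReal_lt_top)]
  have hc : 0 ≤ (Real.sqrt (2 * Real.pi))⁻¹ := by positivity
  refine Integrable.mono' (integrable_affine_exp_half ((Real.sqrt (2 * Real.pi))⁻¹ * |a|)
    ((Real.sqrt (2 * Real.pi))⁻¹ * |b|)) ?_ (Filter.Eventually.of_forall fun x => ?_)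
  · exact hr.mul (gpdf_cont.measurable.ennreal_ofReal.ennreal_toReal.aestronglyMeasurable)
  · rw [Real.norm_eq_abs, abs_mul, ENNReal.toReal_ofReal (gpdf_nonneg x)]
    have h1 : |r x| ≤ |a| + |b| * |x| := by
      refine (h x).trans (add_le_add (le_abs_self a) ?_)
      exact mul_le_mul_of_nonneg_right (le_abs_self b) (abs_nonneg x)
    have h2 : |gpdf x| = (Real.sqrt (2 * Real.pi))⁻¹ * Real.exp (-(1/2) * x ^ 2) := by
      rw [abs_of_nonneg (gpdf_nonneg x)]; rfl
    rw [h2]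
    calc |r x| * ((Real.sqrt (2 * Real.pi))⁻¹ * Real.exp (-(1/2) * x ^ 2))
        ≤ (|a| + |b| * |x|) * ((Real.sqrt (2 * Real.pi))⁻¹ * Real.exp (-(1/2) * x ^ 2)) := by
          exact mul_le_mul_of_nonneg_right h1 (by positivity)
      _ = ((Real.sqrt (2 * Real.pi))⁻¹ * |a| + (Real.sqrt (2 * Real.pi))⁻¹ * |b| * |x|)
            * Real.exp (-(1/2) * x ^ 2) := by ring


lemma exp_half_tendsto_atTop : Tendsto (fun x : ℝ => Real.exp (-(1/2) * x ^ 2)) atTop (nhds 0) := by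
  apply Real.tendsto_exp_atBot.comp
  have h : Tendsto (fun x : ℝ => x ^ 2) atTop atTop := by
    exact tendsto_pow_atTop (by norm_num)
  have := h.const_mul_atTop (show (0:ℝ) < 1/2 by norm_num)
  have h2 : Tendsto (fun x : ℝ => (1/2) * x ^ 2) atTop atTop := this
  have h3 := tendsto_neg_atTop_atBot.comp h2
  simpa [Function.comp_def, neg_mul] using h3

lemma exp_half_tendsto_atBot : Tendsto (fun x : ℝ => Real.exp (-(1/2) * x ^ 2)) atBot (nhds 0) := by
  have h := exp_half_tendsto_atTop.comp (tendsto_neg_atBot_atTop)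
  simpa [Function.comp_def] using h

/-- Gaussian integration by parts. -/
lemma gauss_ibp (f f' : ℝ → ℝ) (hder : ∀ x, HasDerivAt f (f' x) x) (hf'c : Continuous f')
    (M M' : ℝ) (hM : ∀ x, |f x| ≤ M) (hM' : ∀ x, |f' x| ≤ M') :
    ∫ x, x * f x ∂(gaussianReal 0 1) = ∫ x, f' x ∂(gaussianReal 0 1) := by
  set c : ℝ := (Real.sqrt (2 * Real.pi))⁻¹ with hc
  have hc0 : 0 ≤ c := by positivity
  set e : ℝ → ℝ := fun x => Real.exp (-(1/2) * x ^ 2) with he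
  have he_pos : ∀ x, 0 < e x := fun x => Real.exp_pos _
  have hfc : Continuous f := by
    rw [continuous_iff_continuousAt]; exact fun x => (hder x).continuousAt
  have heder : ∀ x : ℝ, HasDerivAt e (e x * (-x)) x := by
    intro x
    have h1 : HasDerivAt (fun x : ℝ => -(1/2) * x ^ 2) (-(1/2) * (2 * x ^ 1)) x :=
      (hasDerivAt_pow 2 x).const_mul (-(1/2))
    have := h1.exp
    convert this using 1
    simp only [he, pow_one]
    ring
  have hHder : ∀ x : ℝ, HasDerivAt (fun x => f x * e x) ((f' x - x * f x) * e x) x := by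
    intro x
    have := (hder x).mul (heder x)
    refine this.congr_deriv ?_
    ring
  have hM0 : 0 ≤ M := (abs_nonneg _).trans (hM 0)
  have hM'0 : 0 ≤ M' := (abs_nonneg _).trans (hM' 0)
  have hH'c : Continuous fun x => (f' x - x * f x) * e x := by
    apply Continuous.mul
    · exact hf'c.sub (continuous_id.mul hfc)
    · exact (Real.continuous_exp.comp (by continuity))
  have hbound : ∀ x : ℝ, ‖(f' x - x * f x) * e x‖ ≤ (M' + M * |x|) * e x := by
    intro x
    rw [Real.norm_eq_abs, abs_mul, abs_of_nonneg (he_pos x).le]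
    apply mul_le_mul_of_nonneg_right _ (he_pos x).le
    calc |f' x - x * f x| ≤ |f' x| + |x * f x| := abs_sub _ _
      _ ≤ M' + M * |x| := by
          rw [abs_mul]
          exact add_le_add (hM' x) (by
            rw [mul_comm]
            exact mul_le_mul (hM x) le_rfl (abs_nonneg x) hM0)
  have hH'int : Integrable (fun x => (f' x - x * f x) * e x) volume := by
    refine Integrable.mono' (integrable_affine_exp_half M' M) hH'c.aestronglyMeasurable
      (Filter.Eventually.of_forall hbound)
  have htendTop : Tendsto (fun x => f x * e x) atTop (nhds 0) := by
    have hT := exp_half_tendsto_atTop.const_mul M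
    rw [mul_zero] at hT
    apply squeeze_zero_norm (fun x => ?_) hT
    rw [Real.norm_eq_abs, abs_mul, abs_of_nonneg (he_pos x).le]
    exact mul_le_mul_of_nonneg_right (hM x) (he_pos x).le
  have htendBot : Tendsto (fun x => f x * e x) atBot (nhds 0) := by
    have hT := exp_half_tendsto_atBot.const_mul M
    rw [mul_zero] at hT
    apply squeeze_zero_norm (fun x => ?_) hT
    rw [Real.norm_eq_abs, abs_mul, abs_of_nonneg (he_pos x).le]
    exact mul_le_mul_of_nonneg_right (hM x) (he_pos x).le
  have h1 : ∫ x in Iic (0:ℝ), (f' x - x * f x) * e x = f 0 * e 0 - 0 :=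
    integral_Iic_of_hasDerivAt_of_tendsto' (fun x _ => hHder x) hH'int.integrableOn htendBot
  have h2 : ∫ x in Ioi (0:ℝ), (f' x - x * f x) * e x = 0 - f 0 * e 0 :=
    integral_Ioi_of_hasDerivAt_of_tendsto' (fun x _ => hHder x) hH'int.integrableOn htendTop
  have htot : ∫ x, (f' x - x * f x) * e x = 0 := by
    rw [← intervalIntegral.integral_Iic_add_Ioi hH'int.integrableOn hH'int.integrableOn, h1, h2]
    ring
  have hint1 : Integrable (fun x => gpdf x * (x * f x)) volume := by
    refine Integrable.mono' (integrable_affine_exp_half 0 (c * M)) ?_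
      (Filter.Eventually.of_forall fun x => ?_)
    · exact (gpdf_cont.mul (continuous_id.mul hfc)).aestronglyMeasurable
    · rw [Real.norm_eq_abs]
      have : |gpdf x * (x * f x)| = c * e x * (|x| * |f x|) := by
        rw [abs_mul, abs_mul, abs_of_nonneg (gpdf_nonneg x)]
        show c * e x * _ = _
        ring
      rw [this]
      calc c * e x * (|x| * |f x|) ≤ c * e x * (|x| * M) := by
            apply mul_le_mul_of_nonneg_left _ (by positivity)
            exact mul_le_mul_of_nonneg_left (hM x) (abs_nonneg x)
        _ = (0 + c * M * |x|) * e x := by ring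
  have hint2 : Integrable (fun x => gpdf x * f' x) volume := by
    refine Integrable.mono' (integrable_affine_exp_half (c * M') 0) ?_
      (Filter.Eventually.of_forall fun x => ?_)
    · exact (gpdf_cont.mul hf'c).aestronglyMeasurable
    · rw [Real.norm_eq_abs]
      have : |gpdf x * f' x| = c * e x * |f' x| := by
        rw [abs_mul, abs_of_nonneg (gpdf_nonneg x)]
        show c * e x * _ = _
        ring
      rw [this]
      calc c * e x * |f' x| ≤ c * e x * M' := by
            exact mul_le_mul_of_nonneg_left (hM' x) (by positivity)
        _ = (c * M' + 0 * |x|) * e x := by ring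
  have key : (∫ x, gpdf x * f' x) - ∫ x, gpdf x * (x * f x) = 0 := by
    rw [← integral_sub hint2 hint1]
    have : ∀ x : ℝ, gpdf x * f' x - gpdf x * (x * f x) = c * ((f' x - x * f x) * e x) := by
      intro x
      show _ - _ = c * _
      unfold gpdf
      ring
    rw [integral_congr_ae (Filter.Eventually.of_forall this), MeasureTheory.integral_const_mul, htot, mul_zero]
  rw [integral_gaussianReal_eq, integral_gaussianReal_eq]
  linarith [key]


instance : Measure.IsAddHaarMeasure volume (G := ℝ × ℝ) :=
  Measure.prod.instIsAddHaarMeasure _ _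

noncomputable def rotLin (c s : ℝ) : (ℝ × ℝ) →ₗ[ℝ] (ℝ × ℝ) :=
  LinearMap.prod (c • LinearMap.fst ℝ ℝ ℝ + s • LinearMap.snd ℝ ℝ ℝ)
    (s • LinearMap.fst ℝ ℝ ℝ - c • LinearMap.snd ℝ ℝ ℝ)

lemma rotLin_apply (c s : ℝ) (z : ℝ × ℝ) :
    rotLin c s z = (c * z.1 + s * z.2, s * z.1 - c * z.2) := by
  simp [rotLin, LinearMap.prod_apply, smul_eq_mul]

lemma rotLin_invol {c s : ℝ} (h : c ^ 2 + s ^ 2 = 1) :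
    (rotLin c s).comp (rotLin c s) = LinearMap.id := by
  apply LinearMap.ext
  intro z
  simp only [LinearMap.comp_apply, rotLin_apply, LinearMap.id_apply]
  apply Prod.ext
  · show c * (c * z.1 + s * z.2) + s * (s * z.1 - c * z.2) = z.1
    linear_combination z.1 * h
  · show s * (c * z.1 + s * z.2) - c * (s * z.1 - c * z.2) = z.2
    linear_combination z.2 * h

lemma rotLin_det_abs {c s : ℝ} (h : c ^ 2 + s ^ 2 = 1) :
    |LinearMap.det (rotLin c s)| = 1 := by
  have h1 : LinearMap.det (rotLin c s) * LinearMap.det (rotLin c s) = 1 := by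
    rw [← LinearMap.det_comp, rotLin_invol h, LinearMap.det_id]
  have h2 : (|LinearMap.det (rotLin c s)| - 1) * (|LinearMap.det (rotLin c s)| + 1) = 0 := by
    have := abs_mul (LinearMap.det (rotLin c s)) (LinearMap.det (rotLin c s))
    rw [h1, abs_one] at this
    nlinarith [abs_nonneg (LinearMap.det (rotLin c s))]
  rcases mul_eq_zero.1 h2 with h3 | h3
  · linarith
  · nlinarith [abs_nonneg (LinearMap.det (rotLin c s))]

lemma rotLin_det_ne_zero {c s : ℝ} (h : c ^ 2 + s ^ 2 = 1) :
    LinearMap.det (rotLin c s) ≠ 0 := by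
  intro h0
  have := rotLin_det_abs h
  rw [h0, abs_zero] at this
  norm_num at this

lemma map_rot_volume {c s : ℝ} (h : c ^ 2 + s ^ 2 = 1) :
    Measure.map (fun z : ℝ × ℝ => (c * z.1 + s * z.2, s * z.1 - c * z.2)) volume = volume := by
  have h1 : (fun z : ℝ × ℝ => (c * z.1 + s * z.2, s * z.1 - c * z.2)) = ⇑(rotLin c s) := by
    funext z; rw [rotLin_apply]
  rw [h1, Measure.map_linearMap_addHaar_eq_smul_addHaar _ (rotLin_det_ne_zero h)]
  rw [abs_inv, rotLin_det_abs h]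
  simp

lemma map_withDensity_comp {α : Type*} [MeasurableSpace α] (μ : Measure α) (T : α → α)
    (hT : Measurable T) (F : α → ℝ≥0∞) (hF : Measurable F) :
    Measure.map T (μ.withDensity (fun x => F (T x))) = (Measure.map T μ).withDensity F := by
  ext s hs
  rw [Measure.map_apply hT hs, withDensity_apply _ hs, withDensity_apply _ (hT hs),
    setLIntegral_map hs hF hT]

lemma gauss2_prod_eq :
    (gaussianReal 0 1).prod (gaussianReal 0 1)
      = (volume : Measure (ℝ × ℝ)).withDensity
          (fun z => ENNReal.ofReal (gpdf z.1) * ENNReal.ofReal (gpdf z.2)) := by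
  have hm : Measurable (fun x : ℝ => ENNReal.ofReal (gpdf x)) :=
    gpdf_cont.measurable.ennreal_ofReal
  refine Measure.prod_eq (fun u v hu hv => ?_)
  rw [withDensity_apply _ (hu.prod hv)]
  have : (volume : Measure (ℝ × ℝ)).restrict (u ×ˢ v)
      = (volume.restrict u).prod (volume.restrict v) := by
    rw [Measure.prod_restrict]; rfl
  rw [this, lintegral_prod_mul hm.aemeasurable hm.aemeasurable,
    gaussianReal_eq_withDensity, withDensity_apply _ hu, withDensity_apply _ hv]

lemma map_withDensity_invariant {α : Type*} [MeasurableSpace α] {μ : Measure α} {T : α → α}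
    (hT : Measurable T) {F : α → ℝ≥0∞} (hF : Measurable F) (hmap : Measure.map T μ = μ)
    (hinv : ∀ x, F (T x) = F x) : Measure.map T (μ.withDensity F) = μ.withDensity F := by
  have h1 : μ.withDensity F = μ.withDensity (fun x => F (T x)) := by
    apply withDensity_congr_ae
    filter_upwards with x
    exact (hinv x).symm
  conv_lhs => rw [h1]
  rw [map_withDensity_comp μ T hT F hF, hmap]

lemma measurePreserving_rot {c s : ℝ} (h : c ^ 2 + s ^ 2 = 1) :
    MeasurePreserving (fun z : ℝ × ℝ => (c * z.1 + s * z.2, s * z.1 - c * z.2))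
      ((gaussianReal 0 1).prod (gaussianReal 0 1))
      ((gaussianReal 0 1).prod (gaussianReal 0 1)) := by
  have hTm : Measurable (fun z : ℝ × ℝ => (c * z.1 + s * z.2, s * z.1 - c * z.2)) := by
    fun_prop
  refine ⟨hTm, ?_⟩
  rw [gauss2_prod_eq]
  have hFm : Measurable (fun z : ℝ × ℝ => ENNReal.ofReal (gpdf z.1) * ENNReal.ofReal (gpdf z.2)) :=
    ((gpdf_cont.measurable.ennreal_ofReal).comp measurable_fst).mul
      ((gpdf_cont.measurable.ennreal_ofReal).comp measurable_snd)
  have hinv : ∀ z : ℝ × ℝ,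
      ENNReal.ofReal (gpdf (c * z.1 + s * z.2)) * ENNReal.ofReal (gpdf (s * z.1 - c * z.2))
        = ENNReal.ofReal (gpdf z.1) * ENNReal.ofReal (gpdf z.2) := by
    intro z
    rw [← ENNReal.ofReal_mul (gpdf_nonneg _), ← ENNReal.ofReal_mul (gpdf_nonneg _)]
    congr 1
    unfold gpdf
    have hcomb : ∀ a b : ℝ, (Real.sqrt (2 * Real.pi))⁻¹ * Real.exp a
        * ((Real.sqrt (2 * Real.pi))⁻¹ * Real.exp b)
        = (Real.sqrt (2 * Real.pi))⁻¹ * (Real.sqrt (2 * Real.pi))⁻¹ * Real.exp (a + b) := by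
      intro a b
      rw [Real.exp_add]
      ring
    rw [hcomb, hcomb]
    congr 2
    linear_combination (-(1/2) * z.1 ^ 2 - (1/2) * z.2 ^ 2) * h
  exact map_withDensity_invariant hTm hFm (map_rot_volume h) hinv



/-- For the Cholesky coupling `U_a = S Z₁ + μ`, `U_b(C) = S (C Z₁ + √(1-C²) Z₂) + μ` of a
bivariate Gaussian pair with correlation `C`, and bounded `C¹` functions `g₁, g₂` with bounded
nonnegative derivatives, the map `C ↦ E[g₁(U_a) g₂(U_b(C))]` is monotone nondecreasing on
`(-1,1)`. -/
theorem monotoneOn_gaussian_pair_correlation (μ S : ℝ) (hS : 0 < S)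
    (g₁ g₂ : ℝ → ℝ) (hg₁ : ContDiff ℝ 1 g₁) (hg₂ : ContDiff ℝ 1 g₂)
    (hb₁ : ∃ M : ℝ, ∀ x : ℝ, |g₁ x| ≤ M) (hb₂ : ∃ M : ℝ, ∀ x : ℝ, |g₂ x| ≤ M)
    (hb₁' : ∃ M : ℝ, ∀ x : ℝ, |deriv g₁ x| ≤ M) (hb₂' : ∃ M : ℝ, ∀ x : ℝ, |deriv g₂ x| ≤ M)
    (hpos₁ : ∀ x : ℝ, 0 ≤ deriv g₁ x) (hpos₂ : ∀ x : ℝ, 0 ≤ deriv g₂ x) :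
    MonotoneOn
      (fun C : ℝ => ∫ z : ℝ × ℝ,
        g₁ (S * z.1 + μ) * g₂ (S * (C * z.1 + Real.sqrt (1 - C^2) * z.2) + μ)
        ∂((gaussianReal 0 1).prod (gaussianReal 0 1)))
      (Set.Ioo (-1 : ℝ) 1) := by
  obtain ⟨M₁, hM₁⟩ := hb₁
  obtain ⟨M₂, hM₂⟩ := hb₂
  obtain ⟨M₁', hM₁'⟩ := hb₁'
  obtain ⟨M₂', hM₂'⟩ := hb₂'
  have hM₁0 : 0 ≤ M₁ := (abs_nonneg _).trans (hM₁ 0)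
  have hM₂0 : 0 ≤ M₂ := (abs_nonneg _).trans (hM₂ 0)
  have hM₁'0 : 0 ≤ M₁' := (abs_nonneg _).trans (hM₁' 0)
  have hM₂'0 : 0 ≤ M₂' := (abs_nonneg _).trans (hM₂' 0)
  have hg₁c : Continuous g₁ := hg₁.continuous
  have hg₂c : Continuous g₂ := hg₂.continuous
  have hg₁d : Continuous (deriv g₁) := hg₁.continuous_deriv le_rfl
  have hg₂d : Continuous (deriv g₂) := hg₂.continuous_deriv le_rfl
  set γ : Measure ℝ := gaussianReal 0 1 with hγ
  set γ2 : Measure (ℝ × ℝ) := γ.prod γ with hγ2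
  have habs : Integrable (fun x : ℝ => |x|) γ :=
    integrable_gauss_of_le continuous_abs.aestronglyMeasurable
      (a := 0) (b := 1) (fun x => by simp [abs_abs])
  have prodInt : ∀ A B : ℝ, Integrable (fun z : ℝ × ℝ => A * |z.1| + B * |z.2|) γ2 := by
    intro A B
    have h1 : Integrable (fun z : ℝ × ℝ => (A * |z.1|) * 1) γ2 :=
      Integrable.mul_prod (habs.const_mul A) (integrable_const 1)
    have h2 : Integrable (fun z : ℝ × ℝ => 1 * (B * |z.2|)) γ2 :=
      Integrable.mul_prod (integrable_const 1) (habs.const_mul B)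
    refine (h1.add h2).congr (Filter.Eventually.of_forall fun z => ?_)
    simp only [Pi.add_apply]
    ring
  have hca : Continuous (fun z : ℝ × ℝ => S * z.1 + μ) :=
    (continuous_const.mul continuous_fst).add continuous_const
  have haffc : ∀ b c : ℝ, Continuous (fun z : ℝ × ℝ => S * (b * z.1 + c * z.2) + μ) := by
    intro b c
    exact (continuous_const.mul ((continuous_const.mul continuous_fst).add
      (continuous_const.mul continuous_snd))).add continuous_const
  have hlinc : ∀ k : ℝ, Continuous (fun z : ℝ × ℝ => S * (z.1 - k * z.2)) := by
    intro k
    exact continuous_const.mul (continuous_fst.sub (continuous_const.mul continuous_snd))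
  set Fd : ℝ → ℝ × ℝ → ℝ := fun C z =>
    g₁ (S * z.1 + μ) * (deriv g₂ (S * (C * z.1 + Real.sqrt (1 - C^2) * z.2) + μ)
      * (S * (z.1 - (C / Real.sqrt (1 - C^2)) * z.2))) with hFd
  set F : ℝ → ℝ := fun C => ∫ z : ℝ × ℝ,
      g₁ (S * z.1 + μ) * g₂ (S * (C * z.1 + Real.sqrt (1 - C^2) * z.2) + μ) ∂γ2 with hF
  -- Claim 1 : derivative of F
  have hasDeriv : ∀ C₀ ∈ Set.Ioo (-1 : ℝ) 1, HasDerivAt F (∫ z, Fd C₀ z ∂γ2) C₀ := by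
    intro C₀ hC₀
    have hC₀abs : |C₀| < 1 := abs_lt.mpr ⟨hC₀.1, hC₀.2⟩
    set ε : ℝ := (1 - |C₀|) / 2 with hε
    have hεpos : 0 < ε := by simp only [hε]; linarith
    set r : ℝ := (1 + |C₀|) / 2 with hr
    have hr1 : r < 1 := by simp only [hr]; linarith
    have hr0 : 0 ≤ r := by positivity
    set sb : ℝ := Real.sqrt (1 - r ^ 2) with hsb
    have hsbpos : 0 < sb := Real.sqrt_pos.mpr (by nlinarith)
    have hball : ∀ C ∈ Metric.ball C₀ ε, |C| ≤ r := by
      intro C hC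
      rw [Metric.mem_ball, Real.dist_eq] at hC
      have := abs_sub_abs_le_abs_sub C C₀
      simp only [hr]
      linarith
    have hsqle : ∀ C : ℝ, |C| ≤ r →
        sb ≤ Real.sqrt (1 - C ^ 2) ∧ 0 < 1 - C ^ 2 := by
      intro C hC
      have h2 : C ^ 2 ≤ r ^ 2 := by
        rw [← sq_abs C]
        exact pow_le_pow_left₀ (abs_nonneg C) hC 2
      exact ⟨Real.sqrt_le_sqrt (by linarith), by nlinarith⟩
    have hFmeas : ∀ C : ℝ, AEStronglyMeasurable
        (fun z : ℝ × ℝ => g₁ (S * z.1 + μ) * g₂ (S * (C * z.1 + Real.sqrt (1 - C^2) * z.2) + μ))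
        γ2 := by
      intro C
      apply Continuous.aestronglyMeasurable
      exact (hg₁c.comp hca).mul (hg₂c.comp (haffc C (Real.sqrt (1 - C^2))))
    have hFint : Integrable
        (fun z : ℝ × ℝ => g₁ (S * z.1 + μ)
          * g₂ (S * (C₀ * z.1 + Real.sqrt (1 - C₀^2) * z.2) + μ)) γ2 := by
      refine Integrable.mono' (integrable_const (M₁ * M₂)) (hFmeas C₀)
        (Filter.Eventually.of_forall fun z => ?_)
      rw [Real.norm_eq_abs, abs_mul]
      exact mul_le_mul (hM₁ _) (hM₂ _) (abs_nonneg _) hM₁0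
    have hFdmeas : AEStronglyMeasurable (Fd C₀) γ2 := by
      apply Continuous.aestronglyMeasurable
      exact (hg₁c.comp hca).mul
        ((hg₂d.comp (haffc C₀ (Real.sqrt (1 - C₀^2)))).mul
          (hlinc (C₀ / Real.sqrt (1 - C₀^2))))
    have hbound : ∀ z : ℝ × ℝ, ∀ C ∈ Metric.ball C₀ ε,
        ‖Fd C z‖ ≤ (M₁ * M₂' * S) * |z.1| + (M₁ * M₂' * S * (r / sb)) * |z.2| := by
      intro z C hC
      have h1 := hball C hC
      obtain ⟨h2, h4⟩ := hsqle C h1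
      have h3 : 0 < Real.sqrt (1 - C ^ 2) := lt_of_lt_of_le hsbpos h2
      have hfrac : |C / Real.sqrt (1 - C ^ 2)| ≤ r / sb := by
        rw [abs_div, abs_of_pos h3]
        exact div_le_div₀ hr0 h1 hsbpos h2
      have e1 : ‖Fd C z‖ = |g₁ (S * z.1 + μ)|
          * (|deriv g₂ (S * (C * z.1 + Real.sqrt (1 - C^2) * z.2) + μ)|
            * (S * |z.1 - (C / Real.sqrt (1 - C^2)) * z.2|)) := by
        rw [Real.norm_eq_abs]
        simp only [hFd]
        rw [abs_mul, abs_mul, abs_mul, abs_of_pos hS]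
      rw [e1]
      have e2 : |z.1 - (C / Real.sqrt (1 - C^2)) * z.2| ≤ |z.1| + (r / sb) * |z.2| := by
        calc |z.1 - (C / Real.sqrt (1 - C^2)) * z.2|
            ≤ |z.1| + |(C / Real.sqrt (1 - C^2)) * z.2| := abs_sub _ _
          _ = |z.1| + |C / Real.sqrt (1 - C^2)| * |z.2| := by rw [abs_mul]
          _ ≤ |z.1| + (r / sb) * |z.2| := by
              have := mul_le_mul_of_nonneg_right hfrac (abs_nonneg z.2)
              linarith
      calc |g₁ (S * z.1 + μ)|
          * (|deriv g₂ (S * (C * z.1 + Real.sqrt (1 - C^2) * z.2) + μ)|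
            * (S * |z.1 - (C / Real.sqrt (1 - C^2)) * z.2|))
          ≤ M₁ * (M₂' * (S * (|z.1| + (r / sb) * |z.2|))) := by
            apply mul_le_mul (hM₁ _) _ (by positivity) hM₁0
            apply mul_le_mul (hM₂' _) _ (by positivity) hM₂'0
            exact mul_le_mul_of_nonneg_left e2 hS.le
        _ = (M₁ * M₂' * S) * |z.1| + (M₁ * M₂' * S * (r / sb)) * |z.2| := by ring
    have hdiff : ∀ z : ℝ × ℝ, ∀ C ∈ Metric.ball C₀ ε,
        HasDerivAt (fun C : ℝ => g₁ (S * z.1 + μ)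
          * g₂ (S * (C * z.1 + Real.sqrt (1 - C^2) * z.2) + μ)) (Fd C z) C := by
      intro z C hC
      obtain ⟨h2, h4⟩ := hsqle C (hball C hC)
      have h3 : 0 < Real.sqrt (1 - C ^ 2) := lt_of_lt_of_le hsbpos h2
      have hu : HasDerivAt (fun C : ℝ => 1 - C ^ 2) (-(2 * C)) C := by
        have := (hasDerivAt_pow 2 C).const_sub 1
        refine this.congr_deriv ?_
        simp
      have hsq : HasDerivAt (fun C : ℝ => Real.sqrt (1 - C ^ 2))
          (1 / (2 * Real.sqrt (1 - C ^ 2)) * (-(2 * C))) C :=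
        (Real.hasDerivAt_sqrt (ne_of_gt h4)).comp C hu
      have hinner : HasDerivAt (fun C : ℝ => S * (C * z.1 + Real.sqrt (1 - C ^ 2) * z.2) + μ)
          (S * (z.1 + (1 / (2 * Real.sqrt (1 - C ^ 2)) * (-(2 * C))) * z.2)) C := by
        have h5 : HasDerivAt (fun C : ℝ => C * z.1) z.1 C := by
          simpa using (hasDerivAt_id C).mul_const z.1
        have h6 := ((h5.add (hsq.mul_const z.2)).const_mul S).add_const μ
        exact h6
      have h8 := ((hg₂.differentiable one_ne_zero
        (S * (C * z.1 + Real.sqrt (1 - C^2) * z.2) + μ)).hasDerivAt).comp C hinner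
      have h9 := h8.const_mul (g₁ (S * z.1 + μ))
      refine h9.congr_deriv ?_
      simp only [hFd]
      have hs0 : Real.sqrt (1 - C^2) ≠ 0 := ne_of_gt h3
      field_simp
      ring
    have hres := hasDerivAt_integral_of_dominated_loc_of_deriv_le (Metric.ball_mem_nhds C₀ hεpos)
      (Filter.Eventually.of_forall fun C => hFmeas C) hFint hFdmeas
      (Filter.Eventually.of_forall fun z C hC => hbound z C hC)
      (prodInt (M₁ * M₂' * S) (M₁ * M₂' * S * (r / sb)))
      (Filter.Eventually.of_forall fun z C hC => hdiff z C hC)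
    exact hres.2
  -- Claim 2 : nonnegativity of the derivative
  have hGnonneg : ∀ C ∈ Set.Ioo (-1 : ℝ) 1, 0 ≤ ∫ z, Fd C z ∂γ2 := by
    intro C hC
    have h4 : 0 < 1 - C ^ 2 := by nlinarith [hC.1, hC.2]
    set s : ℝ := Real.sqrt (1 - C ^ 2) with hs
    have hspos : 0 < s := Real.sqrt_pos.mpr h4
    have hcs : C ^ 2 + s ^ 2 = 1 := by
      rw [hs, Real.sq_sqrt h4.le]; ring
    have hmp : MeasurePreserving (fun z : ℝ × ℝ => (C * z.1 + s * z.2, s * z.1 - C * z.2)) γ2 γ2 :=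
      measurePreserving_rot hcs
    set ψ : ℝ × ℝ → ℝ := fun z =>
      g₁ (S * (C * z.1 + s * z.2) + μ) * (deriv g₂ (S * z.1 + μ) * ((S / s) * z.2)) with hψ
    have hcomp : ∀ z : ℝ × ℝ, Fd C (C * z.1 + s * z.2, s * z.1 - C * z.2) = ψ z := by
      intro z
      simp only [hFd, hψ]
      rw [← hs]
      have e1 : S * (C * (C * z.1 + s * z.2) + s * (s * z.1 - C * z.2)) + μ = S * z.1 + μ := by
        linear_combination S * z.1 * hcs
      have hs0 : s ≠ 0 := ne_of_gt hspos
      have hz : (C * z.1 + s * z.2) - (C / s) * (s * z.1 - C * z.2) = z.2 / s := by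
        field_simp
        linear_combination z.2 * hcs
      rw [e1, hz]
      have : S * (z.2 / s) = (S / s) * z.2 := by ring
      rw [this]
    have hFdCmeas : AEStronglyMeasurable (Fd C) γ2 := by
      apply Continuous.aestronglyMeasurable
      exact (hg₁c.comp hca).mul
        ((hg₂d.comp (haffc C (Real.sqrt (1 - C^2)))).mul
          (hlinc (C / Real.sqrt (1 - C^2))))
    have hstep1 : ∫ z, Fd C z ∂γ2 = ∫ z, ψ z ∂γ2 := by
      conv_lhs => rw [← hmp.map_eq]
      rw [integral_map hmp.measurable.aemeasurable (by rwa [hmp.map_eq])]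
      exact integral_congr_ae (Filter.Eventually.of_forall hcomp)
    have hψmeas : AEStronglyMeasurable ψ γ2 := by
      apply Continuous.aestronglyMeasurable
      exact (hg₁c.comp (haffc C s)).mul
        ((hg₂d.comp hca).mul (continuous_const.mul continuous_snd))
    have hψint : Integrable ψ γ2 := by
      refine Integrable.mono' (prodInt 0 (M₁ * (M₂' * (S / s)))) hψmeas
        (Filter.Eventually.of_forall fun z => ?_)
      rw [Real.norm_eq_abs]
      simp only [hψ]
      rw [abs_mul, abs_mul, abs_mul]
      have hSs : |S / s| = S / s := abs_of_pos (by positivity)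
      rw [hSs]
      calc |g₁ (S * (C * z.1 + s * z.2) + μ)|
          * (|deriv g₂ (S * z.1 + μ)| * (S / s * |z.2|))
          ≤ M₁ * (M₂' * (S / s * |z.2|)) := by
            apply mul_le_mul (hM₁ _) _ (by positivity) hM₁0
            apply mul_le_mul_of_nonneg_right (hM₂' _) (by positivity)
        _ = 0 * |z.1| + (M₁ * (M₂' * (S / s))) * |z.2| := by ring
    have hfub : ∫ z, ψ z ∂γ2 = ∫ x, (∫ y, ψ (x, y) ∂γ) ∂γ := integral_prod ψ hψint
    rw [hstep1, hfub]
    apply integral_nonneg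
    intro x
    show 0 ≤ ∫ y, ψ (x, y) ∂γ
    have hinner : ∫ y, ψ (x, y) ∂γ = (deriv g₂ (S * x + μ) * (S / s))
        * ∫ y, y * g₁ (S * (C * x + s * y) + μ) ∂γ := by
      rw [← MeasureTheory.integral_const_mul]
      apply integral_congr_ae
      apply Filter.Eventually.of_forall
      intro y
      simp only [hψ]
      ring
    rw [hinner]
    have hibp : ∫ y, y * g₁ (S * (C * x + s * y) + μ) ∂γ
        = ∫ y, deriv g₁ (S * (C * x + s * y) + μ) * (S * s) ∂γ := by
      have hder : ∀ t : ℝ, HasDerivAt (fun y : ℝ => g₁ (S * (C * x + s * y) + μ))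
          (deriv g₁ (S * (C * x + s * t) + μ) * (S * s)) t := by
        intro t
        have haff : HasDerivAt (fun t : ℝ => S * (C * x + s * t) + μ) (S * s) t := by
          have h5 : HasDerivAt (fun t : ℝ => s * t) s t := by
            simpa using (hasDerivAt_id t).const_mul s
          have h6 := ((h5.const_add (C * x)).const_mul S).add_const μ
          convert h6 using 1
        exact ((hg₁.differentiable one_ne_zero (S * (C * x + s * t) + μ)).hasDerivAt).comp t haff
      have hf'c : Continuous (fun t : ℝ => deriv g₁ (S * (C * x + s * t) + μ) * (S * s)) :=
        (hg₁d.comp ((continuous_const.mul (continuous_const.add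
          (continuous_const.mul continuous_id))).add continuous_const)).mul continuous_const
      have hbd : ∀ t : ℝ, |deriv g₁ (S * (C * x + s * t) + μ) * (S * s)| ≤ M₁' * (S * s) := by
        intro t
        rw [abs_mul, abs_of_pos (by positivity : (0:ℝ) < S * s)]
        exact mul_le_mul_of_nonneg_right (hM₁' _) (by positivity)
      exact gauss_ibp (fun y : ℝ => g₁ (S * (C * x + s * y) + μ))
        (fun t : ℝ => deriv g₁ (S * (C * x + s * t) + μ) * (S * s))
        hder hf'c M₁ (M₁' * (S * s)) (fun t => hM₁ _) hbd
    rw [hibp]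
    apply mul_nonneg
    · exact mul_nonneg (hpos₂ _) (by positivity)
    · exact integral_nonneg fun y => mul_nonneg (hpos₁ _) (by positivity)
  -- Conclusion
  apply monotoneOn_of_deriv_nonneg (convex_Ioo (-1 : ℝ) 1)
  · intro C hC
    exact ((hasDeriv C hC).continuousAt).continuousWithinAt
  · intro C hC
    rw [interior_Ioo] at hC
    exact ((hasDeriv C hC).differentiableAt).differentiableWithinAt
  · intro C hC
    rw [interior_Ioo] at hC
    rw [(hasDeriv C hC).deriv]
    exact hGnonneg C hC
end

section
/- Let μ ∈ ℝ and Σ > 0, let Z₁, Z₂ be independent standard Gaussian random variables, and for C ∈ (−1,1) set U_a = Σ·Z₁ + μ and U_b(C) = Σ·(C·Z₁ + √(1−C²)·Z₂) + μ. If g₁, g₂ : ℝ → ℝ are twice continuously differentiable with g₁, g₂ and their first and second derivatives all bounded, then the function F(C) = E[g₁(U_a)·g₂(U_b(C))] is twice differentiable on (−1,1) and F''(C) = Σ⁴·E[g₁''(U_a)·g₂''(U_b(C))]. -/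
open MeasureTheory ProbabilityTheory Real Filter

noncomputable section PriceAux

def ρg : ℝ → ℝ := gaussianPDFReal 0 1

lemma ρg_eq (x : ℝ) : ρg x = (Real.sqrt (2*Real.pi))⁻¹ * Real.exp (-(x^2)/2) := by
  simp [ρg, gaussianPDFReal]

lemma ρg_nonneg (x : ℝ) : 0 ≤ ρg x := gaussianPDFReal_nonneg 0 1 x

lemma ρg_cont : Continuous ρg := by
  have : Continuous fun x : ℝ => (Real.sqrt (2*Real.pi))⁻¹ * Real.exp (-(x^2)/2) := by
    fun_prop
  exact this.congr (fun x => (ρg_eq x).symm)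

lemma ρg_le (x : ℝ) : ρg x ≤ Real.exp (-(x^2)/2) := by
  rw [ρg_eq]
  have h1 : (1:ℝ) ≤ Real.sqrt (2*Real.pi) := by
    rw [show (1:ℝ) = Real.sqrt 1 by simp]
    exact Real.sqrt_le_sqrt (by nlinarith [Real.pi_gt_three])
  have h2 : (Real.sqrt (2*Real.pi))⁻¹ ≤ 1 := by
    apply inv_le_one_of_one_le₀ h1
  nlinarith [Real.exp_pos (-(x^2)/2)]

lemma ρg_hasDeriv (x : ℝ) : HasDerivAt ρg (-x * ρg x) x := by
  have hfun : ρg = fun x : ℝ => (Real.sqrt (2*Real.pi))⁻¹ * Real.exp (-(x^2)/2) :=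
    funext ρg_eq
  rw [hfun]
  have hinner : HasDerivAt (fun x : ℝ => -(x^2)/2) (-x) x := by
    have := (hasDerivAt_pow 2 x).neg.div_const 2
    refine this.congr_deriv ?_
    norm_num
    ring
  have h := ((Real.hasDerivAt_exp (-(x^2)/2)).comp x hinner).const_mul
      ((Real.sqrt (2*Real.pi))⁻¹)
  refine h.congr_deriv ?_
  beta_reduce
  ring

lemma gaussianReal_eq : gaussianReal 0 1 =
    volume.withDensity (fun x => ((Real.toNNReal (ρg x) : NNReal) : ENNReal)) := by
  rw [gaussianReal_of_var_ne_zero 0 one_ne_zero]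
  rfl

lemma integral_gauss_eq (f : ℝ → ℝ) :
    ∫ x, f x ∂(gaussianReal 0 1) = ∫ x, f x * ρg x := by
  rw [gaussianReal_eq,
    integral_withDensity_eq_integral_smul
      ((show Measurable ρg from measurable_gaussianPDFReal 0 1).real_toNNReal)]
  congr 1
  funext x
  rw [NNReal.smul_def, Real.coe_toNNReal _ (ρg_nonneg x), smul_eq_mul, mul_comm]

lemma integrable_gauss_iff (f : ℝ → ℝ) :
    Integrable f (gaussianReal 0 1) ↔ Integrable (fun x => f x * ρg x) volume := by
  rw [gaussianReal_eq,
    integrable_withDensity_iff_integrable_smul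
      ((show Measurable ρg from measurable_gaussianPDFReal 0 1).real_toNNReal)]
  constructor <;> intro h <;> refine h.congr (Filter.Eventually.of_forall fun x => ?_) <;>
    simp only [NNReal.smul_def, Real.coe_toNNReal _ (ρg_nonneg x), smul_eq_mul, mul_comm]

lemma poly_le_exp (x : ℝ) : (1+x^2)^2 ≤ 64 * Real.exp (x^2/4) := by
  have h1 := Real.add_one_le_exp (x^2/8)
  have h2 : Real.exp (x^2/8) * Real.exp (x^2/8) = Real.exp (x^2/4) := by
    rw [← Real.exp_add]; ring_nf
  nlinarith [Real.exp_pos (x^2/8), sq_nonneg x, sq_nonneg (x^2)]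

lemma int_poly : Integrable (fun x : ℝ => (1+x^2)^2 * Real.exp (-(x^2)/2)) volume := by
  have hint : Integrable (fun x : ℝ => 64 * Real.exp (-(1/4 : ℝ) * x^2)) volume :=
    (integrable_exp_neg_mul_sq (by norm_num : (0:ℝ) < 1/4)).const_mul 64
  refine hint.mono' (Continuous.aestronglyMeasurable (by fun_prop)) (Filter.Eventually.of_forall fun x => ?_)
  have h1 : (0:ℝ) ≤ (1+x^2)^2 * Real.exp (-(x^2)/2) := by positivity
  rw [Real.norm_eq_abs, abs_of_nonneg h1]
  have h2 : Real.exp (x^2/4) * Real.exp (-(x^2)/2) = Real.exp (-(1/4:ℝ) * x^2) := by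
    rw [← Real.exp_add]; ring_nf
  nlinarith [poly_le_exp x, Real.exp_pos (-(x^2)/2), Real.exp_pos (-(1/4:ℝ) * x^2)]

lemma integrable_gauss {f : ℝ → ℝ} (hf : Continuous f) {A : ℝ}
    (h : ∀ x, |f x| ≤ A * (1+x^2)^2) : Integrable f (gaussianReal 0 1) := by
  rw [integrable_gauss_iff]
  refine (int_poly.const_mul A).mono' ((hf.mul ρg_cont).aestronglyMeasurable) (Filter.Eventually.of_forall fun x => ?_)
  have hA : 0 ≤ A := le_trans (abs_nonneg _) (by simpa using h 0)
  rw [Real.norm_eq_abs, abs_mul, abs_of_nonneg (ρg_nonneg x)]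
  calc |f x| * ρg x ≤ (A * (1+x^2)^2) * Real.exp (-(x^2)/2) := by
        apply mul_le_mul (h x) (ρg_le x) (ρg_nonneg x)
        positivity
    _ = A * ((1+x^2)^2 * Real.exp (-(x^2)/2)) := by ring

lemma tendsto_poly_ρg_atTop {A : ℝ} (hA : 0 ≤ A) :
    Tendsto (fun x : ℝ => A * (1+x^2) * Real.exp (-(x^2)/2)) atTop (nhds 0) ∧
    Tendsto (fun x : ℝ => A * (1+x^2) * Real.exp (-(x^2)/2)) atBot (nhds 0) := by
  have hsq_top : Tendsto (fun x : ℝ => x^2) atTop atTop := by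
    simpa using tendsto_pow_atTop (two_ne_zero)
  have hsq_bot : Tendsto (fun x : ℝ => x^2) atBot atTop := by
    have : Tendsto (fun x : ℝ => |x|^2) atBot atTop :=
      (tendsto_pow_atTop (two_ne_zero)).comp tendsto_abs_atBot_atTop
    simpa [sq_abs] using this
  have key : ∀ l : Filter ℝ, Tendsto (fun x : ℝ => x^2) l atTop →
      Tendsto (fun x : ℝ => A * (1+x^2) * Real.exp (-(x^2)/2)) l (nhds 0) := by
    intro l hl
    have hb : ∀ x : ℝ, ‖A * (1+x^2) * Real.exp (-(x^2)/2)‖ ≤ 4*A * Real.exp (-(x^2)/4) := by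
      intro x
      have e1 : Real.exp (x^2/4) * Real.exp (-(x^2)/2) = Real.exp (-(x^2)/4) := by
        rw [← Real.exp_add]; ring_nf
      have e2 : (1+x^2) ≤ 4 * Real.exp (x^2/4) := by
        nlinarith [Real.add_one_le_exp (x^2/4), sq_nonneg x]
      have h1 : (0:ℝ) ≤ A * (1+x^2) * Real.exp (-(x^2)/2) := by positivity
      rw [Real.norm_eq_abs, abs_of_nonneg h1]
      have h3 := mul_le_mul_of_nonneg_right e2 (Real.exp_pos (-(x^2)/2)).le
      have h4 := mul_le_mul_of_nonneg_left h3 hA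
      nlinarith [h4, e1]
    refine squeeze_zero_norm hb ?_
    have h2 : Tendsto (fun x : ℝ => -(x^2)/4) l atBot := by
      apply Tendsto.atBot_div_const (by norm_num)
      exact (tendsto_neg_atBot_iff.mpr hl)
    have := (Real.tendsto_exp_atBot.comp h2).const_mul (4*A)
    simpa [mul_comm] using this
  exact ⟨key _ hsq_top, key _ hsq_bot⟩

lemma stein {f f' : ℝ → ℝ} (hd : ∀ x, HasDerivAt f (f' x) x) (hc' : Continuous f') {A : ℝ}
    (hf : ∀ x, |f x| ≤ A*(1+x^2)) (hf' : ∀ x, |f' x| ≤ A*(1+x^2)) :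
    ∫ x, x * f x ∂(gaussianReal 0 1) = ∫ x, f' x ∂(gaussianReal 0 1) := by
  have hA : 0 ≤ A := le_trans (abs_nonneg _) (by simpa using hf 0)
  have hcf : Continuous f := continuous_iff_continuousAt.mpr fun x => (hd x).continuousAt
  -- g = f * ρg
  set g : ℝ → ℝ := fun x => f x * ρg x with hg_def
  have hg' : ∀ x, HasDerivAt g ((f' x - x * f x) * ρg x) x := by
    intro x
    have := (hd x).mul (ρg_hasDeriv x)
    refine this.congr_deriv ?_
    ring
  have habs : ∀ x : ℝ, |(f' x - x * f x) * ρg x| ≤ 2*A * ((1+x^2)^2 * Real.exp (-(x^2)/2)) := by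
    intro x
    rw [abs_mul, abs_of_nonneg (ρg_nonneg x)]
    have h1 : |f' x - x * f x| ≤ A*(1+x^2) + |x| * (A*(1+x^2)) := by
      calc |f' x - x * f x| ≤ |f' x| + |x * f x| := abs_sub _ _
        _ ≤ A*(1+x^2) + |x| * (A*(1+x^2)) := by
            rw [abs_mul]
            exact add_le_add (hf' x) (mul_le_mul_of_nonneg_left (hf x) (abs_nonneg x))
    have hx : |x| ≤ 1 + x^2 := by nlinarith [sq_nonneg (|x| - 1), sq_abs x, abs_nonneg x]
    have t1 : A*(1+x^2) ≤ A*(1+x^2)^2 := by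
      nlinarith [mul_nonneg (mul_nonneg hA (by positivity : (0:ℝ) ≤ 1+x^2)) (sq_nonneg x)]
    have t2 : |x| * (A*(1+x^2)) ≤ A*(1+x^2)^2 := by
      calc |x| * (A*(1+x^2)) ≤ (1+x^2) * (A*(1+x^2)) :=
            mul_le_mul_of_nonneg_right hx (by positivity)
        _ = A*(1+x^2)^2 := by ring
    have h2 : A*(1+x^2) + |x| * (A*(1+x^2)) ≤ 2*A*(1+x^2)^2 := by linarith
    have := mul_le_mul (h1.trans h2) (ρg_le x) (ρg_nonneg x) (by positivity)
    calc |f' x - x * f x| * ρg x ≤ 2*A*(1+x^2)^2 * Real.exp (-(x^2)/2) := this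
      _ = 2*A * ((1+x^2)^2 * Real.exp (-(x^2)/2)) := by ring
  have hint_g' : Integrable (fun x => (f' x - x * f x) * ρg x) volume := by
    refine ((int_poly.const_mul (2*A)).mono'
      (((hc'.sub (continuous_id.mul hcf)).mul ρg_cont).aestronglyMeasurable)
      (Filter.Eventually.of_forall fun x => ?_))
    rw [Real.norm_eq_abs]
    exact habs x
  have htop : Tendsto g atTop (nhds 0) := by
    refine squeeze_zero_norm (fun x => ?_) (tendsto_poly_ρg_atTop hA).1
    rw [Real.norm_eq_abs, hg_def, abs_mul, abs_of_nonneg (ρg_nonneg x)]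
    exact mul_le_mul (hf x) (ρg_le x) (ρg_nonneg x) (by positivity)
  have hbot : Tendsto g atBot (nhds 0) := by
    refine squeeze_zero_norm (fun x => ?_) (tendsto_poly_ρg_atTop hA).2
    rw [Real.norm_eq_abs, hg_def, abs_mul, abs_of_nonneg (ρg_nonneg x)]
    exact mul_le_mul (hf x) (ρg_le x) (ρg_nonneg x) (by positivity)
  have hIoi : ∫ x in Set.Ioi (0:ℝ), (f' x - x * f x) * ρg x = 0 - g 0 :=
    MeasureTheory.integral_Ioi_of_hasDerivAt_of_tendsto
      (hg' 0).continuousAt.continuousWithinAt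
      (fun x _ => hg' x) hint_g'.integrableOn htop
  have hIic : ∫ x in Set.Iic (0:ℝ), (f' x - x * f x) * ρg x = g 0 - 0 :=
    MeasureTheory.integral_Iic_of_hasDerivAt_of_tendsto
      (hg' 0).continuousAt.continuousWithinAt
      (fun x _ => hg' x) hint_g'.integrableOn hbot
  have hsplit : ∫ x, (f' x - x * f x) * ρg x = 0 := by
    rw [← intervalIntegral.integral_Iic_add_Ioi hint_g'.integrableOn hint_g'.integrableOn,
      hIoi, hIic]
    ring
  -- now split the integral
  have hint1 : Integrable (fun x => f' x * ρg x) volume := by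
    rw [← integrable_gauss_iff]
    refine integrable_gauss hc' (A := A) (fun x => (hf' x).trans ?_)
    nlinarith [mul_nonneg (mul_nonneg hA (by positivity : (0:ℝ) ≤ 1+x^2)) (sq_nonneg x)]
  have hint2 : Integrable (fun x => (x * f x) * ρg x) volume := by
    rw [← integrable_gauss_iff]
    refine integrable_gauss ((continuous_id.mul hcf)) (A := 2*A) (fun x => ?_)
    rw [abs_mul]
    have hx : |x| ≤ 1 + x^2 := by nlinarith [sq_nonneg (|x| - 1), sq_abs x, abs_nonneg x]
    calc |x| * |f x| ≤ |x| * (A*(1+x^2)) :=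
          mul_le_mul_of_nonneg_left (hf x) (abs_nonneg x)
      _ ≤ (1+x^2) * (A*(1+x^2)) := mul_le_mul_of_nonneg_right hx (by positivity)
      _ ≤ 2*A*(1+x^2)^2 := by nlinarith [mul_nonneg (mul_nonneg hA (by positivity : (0:ℝ) ≤ 1+x^2)) (sq_nonneg ((1:ℝ)+x^2))]
  have : (∫ x, f' x * ρg x) - ∫ x, (x * f x) * ρg x = 0 := by
    rw [← MeasureTheory.integral_sub hint1 hint2]
    rw [← hsplit]
    congr 1
    funext x
    ring
  rw [integral_gauss_eq, integral_gauss_eq]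
  linarith

lemma integrable_gauss2 {f : ℝ×ℝ → ℝ} (hf : Continuous f) {A : ℝ}
    (h : ∀ z, |f z| ≤ A * ((1+z.1^2)^2 * (1+z.2^2)^2)) :
    Integrable f ((gaussianReal 0 1).prod (gaussianReal 0 1)) := by
  have hA : 0 ≤ A := le_trans (abs_nonneg _) (by simpa using h (0,0))
  have hbase : Integrable (fun z : ℝ×ℝ => (1+z.1^2)^2 * (1+z.2^2)^2)
      ((gaussianReal 0 1).prod (gaussianReal 0 1)) := by
    have h1 : Integrable (fun x : ℝ => (1+x^2)^2) (gaussianReal 0 1) := by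
      refine integrable_gauss (by fun_prop) (A := 1) (fun x => ?_)
      rw [abs_of_nonneg (by positivity : (0:ℝ) ≤ (1+x^2)^2), one_mul]
    exact h1.mul_prod h1
  refine (hbase.const_mul A).mono' hf.aestronglyMeasurable
    (Filter.Eventually.of_forall fun z => ?_)
  rw [Real.norm_eq_abs]
  exact h z

lemma slice_growth_bound {A : ℝ} (hA : 0 ≤ A) (x : ℝ) {v : ℝ} {y : ℝ}
    (h : |v| ≤ A*((1+x^2)*(1+y^2))) : |v| ≤ (A*(1+x^2))*(1+y^2) := by
  calc |v| ≤ A*((1+x^2)*(1+y^2)) := h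
    _ = (A*(1+x^2))*(1+y^2) := by ring

lemma quad_bound (A : ℝ) (hA : 0 ≤ A) (z : ℝ×ℝ) {v : ℝ}
    (h : |v| ≤ A*((1+z.1^2)*(1+z.2^2))) :
    |v| ≤ A * ((1+z.1^2)^2 * (1+z.2^2)^2) := by
  refine h.trans ?_
  have h1 : (1:ℝ) ≤ 1+z.1^2 := by nlinarith [sq_nonneg z.1]
  have h2 : (1:ℝ) ≤ 1+z.2^2 := by nlinarith [sq_nonneg z.2]
  have := mul_le_mul (by nlinarith : (1:ℝ)+z.1^2 ≤ (1+z.1^2)^2)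
    (by nlinarith : (1:ℝ)+z.2^2 ≤ (1+z.2^2)^2) (by positivity) (by positivity)
  nlinarith [this]

lemma weight_quad_bound (A : ℝ) (hA : 0 ≤ A) (z : ℝ×ℝ) {w v : ℝ}
    (hw : |w| ≤ 1 + z.1^2 ∨ |w| ≤ 1 + z.2^2)
    (h : |v| ≤ A*((1+z.1^2)*(1+z.2^2))) :
    |w * v| ≤ A * ((1+z.1^2)^2 * (1+z.2^2)^2) := by
  have h1 : (1:ℝ) ≤ 1+z.1^2 := by nlinarith [sq_nonneg z.1]
  have h2 : (1:ℝ) ≤ 1+z.2^2 := by nlinarith [sq_nonneg z.2]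
  rw [abs_mul]
  rcases hw with hw | hw
  · calc |w| * |v| ≤ (1+z.1^2) * (A*((1+z.1^2)*(1+z.2^2))) :=
        mul_le_mul hw h (abs_nonneg _) (by positivity)
      _ ≤ A * ((1+z.1^2)^2 * (1+z.2^2)^2) := by nlinarith [mul_nonneg (mul_nonneg hA (mul_nonneg (by positivity : (0:ℝ) ≤ (1+z.1^2)^2) (by positivity : (0:ℝ) ≤ 1+z.2^2))) (by nlinarith : (0:ℝ) ≤ z.2^2)]
  · calc |w| * |v| ≤ (1+z.2^2) * (A*((1+z.1^2)*(1+z.2^2))) :=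
        mul_le_mul hw h (abs_nonneg _) (by positivity)
      _ ≤ A * ((1+z.1^2)^2 * (1+z.2^2)^2) := by nlinarith [mul_nonneg (mul_nonneg hA (mul_nonneg (by positivity : (0:ℝ) ≤ (1+z.2^2)^2) (by positivity : (0:ℝ) ≤ 1+z.1^2))) (by nlinarith : (0:ℝ) ≤ z.1^2)]

lemma abs_self_le_quad (t : ℝ) : |t| ≤ 1 + t^2 := by
  nlinarith [sq_nonneg (|t| - 1), sq_abs t, abs_nonneg t]

lemma stein2snd {G G' : ℝ×ℝ → ℝ} (hG : Continuous G) (hG' : Continuous G')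
    (hd : ∀ z : ℝ×ℝ, HasDerivAt (fun y => G (z.1, y)) (G' z) z.2) {A : ℝ}
    (hb : ∀ z, |G z| ≤ A*((1+z.1^2)*(1+z.2^2)))
    (hb' : ∀ z, |G' z| ≤ A*((1+z.1^2)*(1+z.2^2))) :
    ∫ z, z.2 * G z ∂((gaussianReal 0 1).prod (gaussianReal 0 1)) =
    ∫ z, G' z ∂((gaussianReal 0 1).prod (gaussianReal 0 1)) := by
  have hA : 0 ≤ A := le_trans (abs_nonneg _) (by simpa using hb (0,0))
  have hint1 : Integrable (fun z : ℝ×ℝ => z.2 * G z)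
      ((gaussianReal 0 1).prod (gaussianReal 0 1)) :=
    integrable_gauss2 (continuous_snd.mul hG)
      (fun z => weight_quad_bound A hA z (Or.inr (abs_self_le_quad z.2)) (hb z))
  have hint2 : Integrable G' ((gaussianReal 0 1).prod (gaussianReal 0 1)) :=
    integrable_gauss2 hG' (fun z => quad_bound A hA z (hb' z))
  rw [MeasureTheory.integral_prod _ hint1, MeasureTheory.integral_prod _ hint2]
  congr 1
  funext x
  exact stein (f := fun y => G (x, y)) (f' := fun y => G' (x, y))
    (fun y => hd (x, y)) (hG'.comp (Continuous.prodMk_right x)) (A := A*(1+x^2))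
    (fun y => slice_growth_bound hA x (hb (x, y)))
    (fun y => slice_growth_bound hA x (hb' (x, y)))

lemma stein2fst {G G' : ℝ×ℝ → ℝ} (hG : Continuous G) (hG' : Continuous G')
    (hd : ∀ z : ℝ×ℝ, HasDerivAt (fun x => G (x, z.2)) (G' z) z.1) {A : ℝ}
    (hb : ∀ z, |G z| ≤ A*((1+z.1^2)*(1+z.2^2)))
    (hb' : ∀ z, |G' z| ≤ A*((1+z.1^2)*(1+z.2^2))) :
    ∫ z, z.1 * G z ∂((gaussianReal 0 1).prod (gaussianReal 0 1)) =
    ∫ z, G' z ∂((gaussianReal 0 1).prod (gaussianReal 0 1)) := by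
  have hA : 0 ≤ A := le_trans (abs_nonneg _) (by simpa using hb (0,0))
  have hint1 : Integrable (fun z : ℝ×ℝ => z.1 * G z)
      ((gaussianReal 0 1).prod (gaussianReal 0 1)) :=
    integrable_gauss2 (continuous_fst.mul hG)
      (fun z => weight_quad_bound A hA z (Or.inl (abs_self_le_quad z.1)) (hb z))
  have hint2 : Integrable G' ((gaussianReal 0 1).prod (gaussianReal 0 1)) :=
    integrable_gauss2 hG' (fun z => quad_bound A hA z (hb' z))
  rw [MeasureTheory.integral_prod_symm _ hint1, MeasureTheory.integral_prod_symm _ hint2]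
  congr 1
  funext y
  refine stein (f := fun x => G (x, y)) (f' := fun x => G' (x, y))
    (fun x => hd (x, y)) (hG'.comp (continuous_id.prodMk continuous_const))
    (A := A*(1+y^2)) (fun x => ?_) (fun x => ?_)
  · calc |G (x, y)| ≤ A*((1+x^2)*(1+y^2)) := hb (x, y)
      _ = (A*(1+y^2))*(1+x^2) := by ring
  · calc |G' (x, y)| ≤ A*((1+x^2)*(1+y^2)) := hb' (x, y)
      _ = (A*(1+y^2))*(1+x^2) := by ring

set_option maxHeartbeats 1600000 in
lemma key (μ S : ℝ) (hS : 0 < S) (f₁ f₂ : ℝ → ℝ)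
    (h₁ : ContDiff ℝ 1 f₁) (h₂ : ContDiff ℝ 1 f₂) (M : ℝ) (hM1 : 1 ≤ M)
    (hf₁ : ∀ x, |f₁ x| ≤ M) (hf₂ : ∀ x, |f₂ x| ≤ M)
    (hf₁' : ∀ x, |deriv f₁ x| ≤ M) (hf₂' : ∀ x, |deriv f₂ x| ≤ M)
    (C : ℝ) (hC : C ∈ Set.Ioo (-1 : ℝ) 1) :
    HasDerivAt (fun C' : ℝ => ∫ z : ℝ × ℝ,
        f₁ (S * z.1 + μ) * f₂ (S * (C' * z.1 + Real.sqrt (1 - C'^2) * z.2) + μ)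
        ∂((gaussianReal 0 1).prod (gaussianReal 0 1)))
      (S^2 * ∫ z : ℝ × ℝ,
        deriv f₁ (S * z.1 + μ) * deriv f₂ (S * (C * z.1 + Real.sqrt (1 - C^2) * z.2) + μ)
        ∂((gaussianReal 0 1).prod (gaussianReal 0 1))) C := by
  obtain ⟨hc1, hc2⟩ := hC
  have hM0 : (0:ℝ) ≤ M := le_trans zero_le_one hM1
  have habsC : |C| < 1 := abs_lt.mpr ⟨hc1, hc2⟩
  have h1C : 0 < 1 - C^2 := by nlinarith [sq_abs C, abs_nonneg C]
  set θ : ℝ := Real.sqrt (1 - C^2) with hθdef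
  have hθpos : 0 < θ := Real.sqrt_pos.mpr h1C
  have hθsq : θ^2 = 1 - C^2 := Real.sq_sqrt h1C.le
  have hθle1 : θ ≤ 1 := by
    rw [hθdef]
    exact Real.sqrt_le_one.mpr (by nlinarith [sq_nonneg C])
  have hcf₁ : Continuous f₁ := h₁.continuous
  have hcf₂ : Continuous f₂ := h₂.continuous
  have hcf₁' : Continuous (deriv f₁) := h₁.continuous_deriv le_rfl
  have hcf₂' : Continuous (deriv f₂) := h₂.continuous_deriv le_rfl
  have hdf₁ : ∀ u : ℝ, HasDerivAt f₁ (deriv f₁ u) u :=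
    fun u => (h₁.differentiable one_ne_zero u).hasDerivAt
  have hdf₂ : ∀ u : ℝ, HasDerivAt f₂ (deriv f₂ u) u :=
    fun u => (h₂.differentiable one_ne_zero u).hasDerivAt
  -- the central bound helper
  have one_le_quad : ∀ t : ℝ, (1:ℝ) ≤ 1 + t^2 := fun t => by nlinarith [sq_nonneg t]
  have central : ∀ (e c t u v x y B : ℝ), e = c * (t * (u * v)) → |c| ≤ B →
      (|t| ≤ 1+x^2 ∨ |t| ≤ 1+y^2) → |u| ≤ M → |v| ≤ M →
      |e| ≤ (M^2*B) * ((1+x^2)*(1+y^2)) := by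
    intro e c t u v x y B he hc ht hu hv
    have hB0 : 0 ≤ B := le_trans (abs_nonneg c) hc
    have h1 : |u*v| ≤ M^2 := by
      rw [abs_mul]
      calc |u| * |v| ≤ M*M := mul_le_mul hu hv (abs_nonneg _) hM0
        _ = M^2 := by ring
    rw [he, abs_mul, abs_mul]
    rcases ht with ht | ht
    · have s1 : |c| * (|t| * |u*v|) ≤ B * ((1+x^2) * M^2) :=
        mul_le_mul hc (mul_le_mul ht h1 (abs_nonneg _) (by positivity))
          (by positivity) hB0
      have s2 : B * ((1+x^2) * M^2) ≤ (M^2*B) * ((1+x^2)*(1+y^2)) := by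
        nlinarith [mul_nonneg (mul_nonneg (mul_nonneg hB0
          (by positivity : (0:ℝ) ≤ 1+x^2)) (sq_nonneg M)) (sq_nonneg y)]
      exact le_trans s1 s2
    · have s1 : |c| * (|t| * |u*v|) ≤ B * ((1+y^2) * M^2) :=
        mul_le_mul hc (mul_le_mul ht h1 (abs_nonneg _) (by positivity))
          (by positivity) hB0
      have s2 : B * ((1+y^2) * M^2) ≤ (M^2*B) * ((1+x^2)*(1+y^2)) := by
        nlinarith [mul_nonneg (mul_nonneg (mul_nonneg hB0
          (by positivity : (0:ℝ) ≤ 1+y^2)) (sq_nonneg M)) (sq_nonneg x)]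
      exact le_trans s1 s2
  ------------------------------------------------------------------
  -- Step 1 : differentiation under the integral sign
  ------------------------------------------------------------------
  set π2 : Measure (ℝ×ℝ) := (gaussianReal 0 1).prod (gaussianReal 0 1) with hπ2
  set F' : ℝ → ℝ×ℝ → ℝ := fun C' z =>
    f₁ (S*z.1+μ) * (deriv f₂ (S*(C'*z.1 + Real.sqrt (1-C'^2)*z.2)+μ) *
      (S*(z.1 - C'/Real.sqrt (1-C'^2)*z.2))) with hF'def
  set r : ℝ := (1 + |C|)/2 with hrdef
  have hr1 : r < 1 := by rw [hrdef]; linarith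
  have hr0 : 0 ≤ r := by rw [hrdef]; positivity
  have h1r : 0 < 1 - r^2 := by nlinarith
  set K : ℝ := r / Real.sqrt (1 - r^2) with hKdef
  have hK0 : 0 ≤ K := by rw [hKdef]; positivity
  set ε : ℝ := (1 - |C|)/2 with hεdef
  have hε : 0 < ε := by rw [hεdef]; linarith
  have hball : ∀ C' ∈ Metric.ball C ε, |C'| < r := by
    intro C' hC'
    rw [Metric.mem_ball, Real.dist_eq] at hC'
    rw [hrdef]
    calc |C'| = |C + (C' - C)| := by ring_nf
      _ ≤ |C| + |C' - C| := abs_add_le _ _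
      _ < |C| + ε := by linarith [abs_sub_comm C' C ▸ hC']
      _ = (1 + |C|)/2 := by rw [hεdef]; ring
  have hballpos : ∀ C' ∈ Metric.ball C ε, 0 < 1 - C'^2 := by
    intro C' hC'
    have := hball C' hC'
    nlinarith [sq_abs C', abs_nonneg C']
  have hq_bound : ∀ C' ∈ Metric.ball C ε, |C' / Real.sqrt (1 - C'^2)| ≤ K := by
    intro C' hC'
    have h1 := hball C' hC'
    have h2 : Real.sqrt (1 - r^2) ≤ Real.sqrt (1 - C'^2) := by
      apply Real.sqrt_le_sqrt
      nlinarith [sq_abs C', abs_nonneg C']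
    have h3 : 0 < Real.sqrt (1 - r^2) := Real.sqrt_pos.mpr h1r
    rw [abs_div, hKdef, abs_of_nonneg (Real.sqrt_nonneg _)]
    exact div_le_div₀ hr0 h1.le h3 h2
  have hdom := hasDerivAt_integral_of_dominated_loc_of_deriv_le (μ := π2)
    (F := fun C' z => f₁ (S * z.1 + μ) *
      f₂ (S * (C' * z.1 + Real.sqrt (1 - C'^2) * z.2) + μ))
    (F' := F') (x₀ := C)
    (bound := fun z => (M^2*(S*(1+K))) * ((1+z.1^2)*(1+z.2^2))) (Metric.ball_mem_nhds C hε)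
    (Filter.Eventually.of_forall (fun C' => Continuous.aestronglyMeasurable (by fun_prop)))
    (by -- integrability at C
      apply integrable_gauss2 (by fun_prop)
      intro z
      refine quad_bound (M^2*1) (by positivity) z ?_
      exact central (f₁ (S*z.1+μ) * f₂ (S * (C * z.1 + Real.sqrt (1 - C^2) * z.2) + μ))
        1 1 (f₁ (S*z.1+μ)) (f₂ (S * (C * z.1 + Real.sqrt (1 - C^2) * z.2) + μ)) z.1 z.2 1
        (by ring) (by norm_num) (Or.inl (by rw [abs_one]; exact one_le_quad z.1))
        (hf₁ _) (hf₂ _))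
    (Continuous.aestronglyMeasurable (by fun_prop))
    (Filter.Eventually.of_forall (fun z => by
      intro C' hC'
      rw [Real.norm_eq_abs]
      have hq := hq_bound C' hC'
      have hsb : |S*(z.1 - C'/Real.sqrt (1-C'^2)*z.2)| ≤ S*(1+K)*((1+z.1^2)*(1+z.2^2)) := by
        rw [abs_mul, abs_of_pos hS]
        have h4 : |z.1 - C'/Real.sqrt (1-C'^2)*z.2| ≤ |z.1| + K*|z.2| := by
          calc |z.1 - C'/Real.sqrt (1-C'^2)*z.2| ≤ |z.1| + |C'/Real.sqrt (1-C'^2)*z.2| :=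
                abs_sub _ _
            _ ≤ |z.1| + K*|z.2| := by
                rw [abs_mul]
                exact add_le_add le_rfl (mul_le_mul_of_nonneg_right hq (abs_nonneg _))
        have h5 : |z.1| + K*|z.2| ≤ (1+K)*((1+z.1^2)*(1+z.2^2)) := by
          have e1 : |z.1| ≤ (1+z.1^2)*(1+z.2^2) := by
            calc |z.1| ≤ 1+z.1^2 := abs_self_le_quad z.1
              _ ≤ (1+z.1^2)*(1+z.2^2) := le_mul_of_one_le_right (by positivity) (one_le_quad z.2)
          have e2 : K*|z.2| ≤ K*((1+z.1^2)*(1+z.2^2)) := by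
            refine mul_le_mul_of_nonneg_left ?_ hK0
            calc |z.2| ≤ 1+z.2^2 := abs_self_le_quad z.2
              _ ≤ (1+z.1^2)*(1+z.2^2) := le_mul_of_one_le_left (by positivity) (one_le_quad z.1)
          calc |z.1| + K*|z.2| ≤ (1+z.1^2)*(1+z.2^2) + K*((1+z.1^2)*(1+z.2^2)) :=
                add_le_add e1 e2
            _ = (1+K)*((1+z.1^2)*(1+z.2^2)) := by ring
        calc S * |z.1 - C'/Real.sqrt (1-C'^2)*z.2| ≤ S * (|z.1| + K*|z.2|) :=
              mul_le_mul_of_nonneg_left h4 hS.le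
          _ ≤ S * ((1+K)*((1+z.1^2)*(1+z.2^2))) := mul_le_mul_of_nonneg_left h5 hS.le
          _ = S*(1+K)*((1+z.1^2)*(1+z.2^2)) := by ring
      have h6 : |F' C' z| ≤ M^2 * |S*(z.1 - C'/Real.sqrt (1-C'^2)*z.2)| := by
        simp only [hF'def]
        rw [abs_mul, abs_mul]
        have hstep : |deriv f₂ (S*(C'*z.1 + Real.sqrt (1-C'^2)*z.2)+μ)| *
            |S*(z.1 - C'/Real.sqrt (1-C'^2)*z.2)| ≤
            M * |S*(z.1 - C'/Real.sqrt (1-C'^2)*z.2)| :=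
          mul_le_mul_of_nonneg_right (hf₂' _) (abs_nonneg _)
        calc |f₁ (S*z.1+μ)| * (|deriv f₂ (S*(C'*z.1 + Real.sqrt (1-C'^2)*z.2)+μ)| *
              |S*(z.1 - C'/Real.sqrt (1-C'^2)*z.2)|)
            ≤ M * (M * |S*(z.1 - C'/Real.sqrt (1-C'^2)*z.2)|) :=
              mul_le_mul (hf₁ (S*z.1+μ)) hstep (by positivity) hM0
          _ = M^2 * |S*(z.1 - C'/Real.sqrt (1-C'^2)*z.2)| := by ring
      calc |F' C' z| ≤ M^2 * (S*(1+K)*((1+z.1^2)*(1+z.2^2))) :=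
            h6.trans (mul_le_mul_of_nonneg_left hsb (by positivity))
        _ = (M^2*(S*(1+K))) * ((1+z.1^2)*(1+z.2^2)) := by ring))
    (by -- integrability of the bound
      apply integrable_gauss2 (by fun_prop)
      intro z
      refine quad_bound (M^2*(S*(1+K))) (by positivity) z ?_
      rw [abs_of_nonneg (by positivity)])
    (Filter.Eventually.of_forall (fun z => by
      intro C' hC'
      have h1C' : 0 < 1 - C'^2 := hballpos C' hC'
      have hsq : HasDerivAt (fun t : ℝ => Real.sqrt (1 - t^2))
          ((-(2*C'))/(2*Real.sqrt (1-C'^2))) C' := by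
        have hin : HasDerivAt (fun t : ℝ => 1 - t^2) (-(2*C')) C' := by
          have := (hasDerivAt_pow 2 C').const_sub 1
          simpa using this
        exact hin.sqrt h1C'.ne'
      have hinner : HasDerivAt
          (fun t : ℝ => S*(t*z.1 + Real.sqrt (1-t^2)*z.2)+μ)
          (S*(z.1 + ((-(2*C'))/(2*Real.sqrt (1-C'^2)))*z.2)) C' := by
        have h := (((hasDerivAt_id C').mul_const z.1).add (hsq.mul_const z.2)).const_mul S
          |>.add_const μ
        refine h.congr_deriv ?_
        ring
      have hcomp := ((hdf₂ _).comp C' hinner).const_mul (f₁ (S*z.1+μ))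
      have heqd : f₁ (S*z.1+μ) * (deriv f₂ (S*(C'*z.1 + Real.sqrt (1-C'^2)*z.2)+μ) *
          (S*(z.1 + ((-(2*C'))/(2*Real.sqrt (1-C'^2)))*z.2))) = F' C' z := by
        simp only [hF'def]
        have hne : Real.sqrt (1-C'^2) ≠ 0 := (Real.sqrt_pos.mpr h1C').ne'
        have : (-(2*C'))/(2*Real.sqrt (1-C'^2)) = -(C'/Real.sqrt (1-C'^2)) := by
          rw [neg_div, mul_div_mul_left _ _ (two_ne_zero)]
        rw [this]
        ring
      rw [← heqd]
      exact hcomp))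
  obtain ⟨hF'int, hderiv⟩ := hdom
  ------------------------------------------------------------------
  -- Step 2 : identify the derivative via Stein identities
  ------------------------------------------------------------------
  have hswap : ∫ z : ℝ×ℝ, F' C z ∂π2 = S^2 * ∫ z : ℝ×ℝ,
      deriv f₁ (S * z.1 + μ) * deriv f₂ (S * (C * z.1 + θ * z.2) + μ) ∂π2 := by
    set P : ℝ×ℝ → ℝ := fun z => f₁ (S*z.1+μ) * f₂ (S*(C*z.1+θ*z.2)+μ) with hPdef
    set Q : ℝ×ℝ → ℝ := fun z => f₁ (S*z.1+μ) * deriv f₂ (S*(C*z.1+θ*z.2)+μ) with hQdef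
    set R : ℝ×ℝ → ℝ := fun z => deriv f₁ (S*z.1+μ) * f₂ (S*(C*z.1+θ*z.2)+μ) with hRdef
    set T : ℝ×ℝ → ℝ := fun z => deriv f₁ (S*z.1+μ) * deriv f₂ (S*(C*z.1+θ*z.2)+μ) with hTdef
    have hPc : Continuous P := by simp only [hPdef]; fun_prop
    have hQc : Continuous Q := by simp only [hQdef]; fun_prop
    have hRc : Continuous R := by simp only [hRdef]; fun_prop
    have hTc : Continuous T := by simp only [hTdef]; fun_prop
    have hby : ∀ x y : ℝ, HasDerivAt (fun y : ℝ => S*(C*x + θ*y)+μ) (S*θ) y := by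
      intro x y
      have h := (((hasDerivAt_id y).const_mul θ).const_add (C*x)).const_mul S |>.add_const μ
      refine h.congr_deriv ?_
      ring
    have hbx : ∀ x y : ℝ, HasDerivAt (fun x : ℝ => S*(C*x + θ*y)+μ) (S*C) x := by
      intro x y
      have h := (((hasDerivAt_id x).const_mul C).add_const (θ*y)).const_mul S |>.add_const μ
      refine h.congr_deriv ?_
      ring
    have hax : ∀ x : ℝ, HasDerivAt (fun x : ℝ => S*x+μ) S x := by
      intro x
      have h := ((hasDerivAt_id x).const_mul S).add_const μ
      refine h.congr_deriv ?_
      ring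
    have hSθB : |S*θ| ≤ 2*S+2 := by
      rw [abs_of_nonneg (by positivity)]
      nlinarith
    have h1B : |(1:ℝ)| ≤ 2*S+2 := by rw [abs_one]; linarith
    -- Stein identity (A): in the second variable, applied to z.1 * P
    have eSA : ∫ z : ℝ×ℝ, z.2 * (z.1 * P z) ∂π2 = ∫ z : ℝ×ℝ, (S*θ) * (z.1 * Q z) ∂π2 := by
      refine stein2snd (A := M^2*(2*S+2)) (by fun_prop) (by fun_prop) ?_ ?_ ?_
      · intro z
        have h := ((hdf₂ (S*(C*z.1+θ*z.2)+μ)).comp z.2 (hby z.1 z.2)).const_mul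
          (z.1 * f₁ (S*z.1+μ))
        refine (h.congr_deriv ?_).congr_of_eventuallyEq (Filter.Eventually.of_forall fun w => ?_)
        all_goals try funext w
        all_goals simp only [hPdef, hQdef, Function.comp]
        all_goals try ring
      · intro z
        exact central _ 1 z.1 (f₁ (S*z.1+μ)) (f₂ (S*(C*z.1+θ*z.2)+μ)) z.1 z.2 (2*S+2)
          (by simp only [hPdef]; all_goals ring) h1B (Or.inl (abs_self_le_quad z.1)) (hf₁ _) (hf₂ _)
      · intro z
        exact central _ (S*θ) z.1 (f₁ (S*z.1+μ)) (deriv f₂ (S*(C*z.1+θ*z.2)+μ)) z.1 z.2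
          (2*S+2) (by simp only [hQdef]; all_goals ring) hSθB (Or.inl (abs_self_le_quad z.1))
          (hf₁ _) (hf₂' _)
    -- Stein identity (B): in the first variable, applied to z.2 * P
    have eSB : ∫ z : ℝ×ℝ, z.1 * (z.2 * P z) ∂π2 =
        ∫ z : ℝ×ℝ, z.2 * (S * R z + (S*C) * Q z) ∂π2 := by
      refine stein2fst (A := M^2*(2*S+2)) (by fun_prop) (by fun_prop) ?_ ?_ ?_
      · intro z
        have hf1 := (hdf₁ (S*z.1+μ)).comp z.1 (hax z.1)
        have hf2 := (hdf₂ (S*(C*z.1+θ*z.2)+μ)).comp z.1 (hbx z.1 z.2)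
        have h := (hf1.mul hf2).const_mul z.2
        refine h.congr_deriv ?_
        all_goals try funext w
        all_goals simp only [hPdef, hRdef, hQdef, Function.comp]
        all_goals try ring
      · intro z
        exact central _ 1 z.2 (f₁ (S*z.1+μ)) (f₂ (S*(C*z.1+θ*z.2)+μ)) z.1 z.2 (2*S+2)
          (by simp only [hPdef]; all_goals ring) h1B (Or.inr (abs_self_le_quad z.2)) (hf₁ _) (hf₂ _)
      · intro z
        have c1 : |S*(z.2*(deriv f₁ (S*z.1+μ) * f₂ (S*(C*z.1+θ*z.2)+μ)))| ≤
            M^2*S*((1+z.1^2)*(1+z.2^2)) := by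
          refine central _ S z.2 (deriv f₁ (S*z.1+μ)) (f₂ (S*(C*z.1+θ*z.2)+μ)) z.1 z.2 S
            (by ring) (by rw [abs_of_pos hS]) (Or.inr (abs_self_le_quad z.2)) (hf₁' _) (hf₂ _)
        have c2 : |(S*C)*(z.2*(f₁ (S*z.1+μ) * deriv f₂ (S*(C*z.1+θ*z.2)+μ)))| ≤
            M^2*S*((1+z.1^2)*(1+z.2^2)) := by
          refine central _ (S*C) z.2 (f₁ (S*z.1+μ)) (deriv f₂ (S*(C*z.1+θ*z.2)+μ)) z.1 z.2 S
            (by ring) ?_ (Or.inr (abs_self_le_quad z.2)) (hf₁ _) (hf₂' _)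
          rw [abs_mul, abs_of_pos hS]
          nlinarith [habsC.le, abs_nonneg C]
        have he : z.2 * (S * R z + (S*C) * Q z) =
            S*(z.2*(deriv f₁ (S*z.1+μ) * f₂ (S*(C*z.1+θ*z.2)+μ))) +
            (S*C)*(z.2*(f₁ (S*z.1+μ) * deriv f₂ (S*(C*z.1+θ*z.2)+μ))) := by
          simp only [hRdef, hQdef]
          ring
        have hnn : (0:ℝ) ≤ M^2*((1+z.1^2)*(1+z.2^2)) := by positivity
        calc |z.2 * (S * R z + (S*C) * Q z)| ≤
              |S*(z.2*(deriv f₁ (S*z.1+μ) * f₂ (S*(C*z.1+θ*z.2)+μ)))| +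
              |(S*C)*(z.2*(f₁ (S*z.1+μ) * deriv f₂ (S*(C*z.1+θ*z.2)+μ)))| := by
              rw [he]; exact abs_add_le _ _
          _ ≤ M^2*S*((1+z.1^2)*(1+z.2^2)) + M^2*S*((1+z.1^2)*(1+z.2^2)) := add_le_add c1 c2
          _ ≤ M^2*(2*S+2)*((1+z.1^2)*(1+z.2^2)) := by nlinarith [hnn]
    -- Stein identity (C): in the second variable, applied to R
    have eSC : ∫ z : ℝ×ℝ, z.2 * R z ∂π2 = ∫ z : ℝ×ℝ, (S*θ) * T z ∂π2 := by
      refine stein2snd (A := M^2*(2*S+2)) (by fun_prop) (by fun_prop) ?_ ?_ ?_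
      · intro z
        have h := ((hdf₂ (S*(C*z.1+θ*z.2)+μ)).comp z.2 (hby z.1 z.2)).const_mul
          (deriv f₁ (S*z.1+μ))
        refine h.congr_deriv ?_
        all_goals try funext w
        all_goals simp only [hRdef, hTdef, Function.comp]
        all_goals try ring
      · intro z
        exact central _ 1 1 (deriv f₁ (S*z.1+μ)) (f₂ (S*(C*z.1+θ*z.2)+μ)) z.1 z.2 (2*S+2)
          (by simp only [hRdef]; all_goals ring) h1B (Or.inl (by rw [abs_one]; exact one_le_quad z.1))
          (hf₁' _) (hf₂ _)
      · intro z
        exact central _ (S*θ) 1 (deriv f₁ (S*z.1+μ)) (deriv f₂ (S*(C*z.1+θ*z.2)+μ)) z.1 z.2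
          (2*S+2) (by simp only [hTdef]; all_goals ring) hSθB
          (Or.inl (by rw [abs_one]; exact one_le_quad z.1)) (hf₁' _) (hf₂' _)
    -- integrability of all the pieces
    have qb : ∀ {g : ℝ×ℝ → ℝ}, Continuous g →
        (∀ z : ℝ×ℝ, |g z| ≤ (M^2*(2*S+2))*((1+z.1^2)*(1+z.2^2))) → Integrable g π2 :=
      fun hc hb => integrable_gauss2 hc (fun z => quad_bound _ (by positivity) z (hb z))
    have intQ1 : Integrable (fun z : ℝ×ℝ => z.1 * Q z) π2 := by
      refine qb (by fun_prop) (fun z => ?_)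
      exact central _ 1 z.1 (f₁ (S*z.1+μ)) (deriv f₂ (S*(C*z.1+θ*z.2)+μ)) z.1 z.2 (2*S+2)
        (by simp only [hQdef]; all_goals ring) h1B (Or.inl (abs_self_le_quad z.1)) (hf₁ _) (hf₂' _)
    have intQ2 : Integrable (fun z : ℝ×ℝ => z.2 * Q z) π2 := by
      refine qb (by fun_prop) (fun z => ?_)
      exact central _ 1 z.2 (f₁ (S*z.1+μ)) (deriv f₂ (S*(C*z.1+θ*z.2)+μ)) z.1 z.2 (2*S+2)
        (by simp only [hQdef]; all_goals ring) h1B (Or.inr (abs_self_le_quad z.2)) (hf₁ _) (hf₂' _)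
    have intR2 : Integrable (fun z : ℝ×ℝ => z.2 * R z) π2 := by
      refine qb (by fun_prop) (fun z => ?_)
      exact central _ 1 z.2 (deriv f₁ (S*z.1+μ)) (f₂ (S*(C*z.1+θ*z.2)+μ)) z.1 z.2 (2*S+2)
        (by simp only [hRdef]; all_goals ring) h1B (Or.inr (abs_self_le_quad z.2)) (hf₁' _) (hf₂ _)
    -- assemble
    have e1 : (S*θ) * (∫ z : ℝ×ℝ, z.1 * Q z ∂π2) =
        S * (∫ z : ℝ×ℝ, z.2 * R z ∂π2) + (S*C) * (∫ z : ℝ×ℝ, z.2 * Q z ∂π2) := by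
      rw [← MeasureTheory.integral_const_mul, ← eSA,
        show (fun z : ℝ×ℝ => z.2*(z.1*P z)) = fun z : ℝ×ℝ => z.1*(z.2*P z) from
          funext fun z => by ring, eSB,
        show (fun z : ℝ×ℝ => z.2 * (S * R z + (S*C) * Q z)) =
          fun z : ℝ×ℝ => S*(z.2*R z) + (S*C)*(z.2*Q z) from funext fun z => by ring,
        MeasureTheory.integral_add (intR2.const_mul S) (intQ2.const_mul (S*C)),
        MeasureTheory.integral_const_mul, MeasureTheory.integral_const_mul]
    have e2 : (∫ z : ℝ×ℝ, z.2 * R z ∂π2) = (S*θ) * ∫ z : ℝ×ℝ, T z ∂π2 := by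
      rw [eSC, MeasureTheory.integral_const_mul]
    have eFC : ∫ z : ℝ×ℝ, F' C z ∂π2 =
        S * (∫ z : ℝ×ℝ, z.1 * Q z ∂π2) - (S*C/θ) * (∫ z : ℝ×ℝ, z.2 * Q z ∂π2) := by
      rw [show (fun z : ℝ×ℝ => F' C z) =
          fun z : ℝ×ℝ => S*(z.1*Q z) - (S*C/θ)*(z.2*Q z) from funext fun z => by
            simp only [hF'def, hQdef, hθdef]
            ring,
        MeasureTheory.integral_sub (intQ1.const_mul S) (intQ2.const_mul (S*C/θ)),
        MeasureTheory.integral_const_mul, MeasureTheory.integral_const_mul]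
    have hθne : θ ≠ 0 := hθpos.ne'
    rw [eFC]
    have hcan : θ * ((S*C/θ)*(∫ z : ℝ×ℝ, z.2 * Q z ∂π2)) =
        (S*C)*(∫ z : ℝ×ℝ, z.2 * Q z ∂π2) := by
      field_simp
    have h3 : θ * (S * (∫ z : ℝ×ℝ, z.1 * Q z ∂π2) -
        (S*C/θ) * (∫ z : ℝ×ℝ, z.2 * Q z ∂π2)) =
        θ * (S^2 * ∫ z : ℝ×ℝ, T z ∂π2) := by
      linear_combination e1 + S * e2 - hcan
    exact mul_left_cancel₀ hθne h3
  rw [show Real.sqrt (1 - C^2) = θ from rfl] at *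
  exact hswap ▸ hderiv

end PriceAux

/-- For the Cholesky coupling `U_a = S Z₁ + μ`, `U_b(C) = S (C Z₁ + √(1-C²) Z₂) + μ` of a
bivariate Gaussian pair with correlation `C`, and `C²` functions `g₁, g₂` bounded together with
their first and second derivatives, the map `F : C ↦ E[g₁(U_a) g₂(U_b(C))]` is twice
differentiable on `(-1,1)` with `F''(C) = S⁴ E[g₁''(U_a) g₂''(U_b(C))]`. -/
theorem hasDerivAt2_gaussian_pair_correlation (μ S : ℝ) (hS : 0 < S)
    (g₁ g₂ : ℝ → ℝ) (hg₁ : ContDiff ℝ 2 g₁) (hg₂ : ContDiff ℝ 2 g₂)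
    (hb₁ : ∃ M : ℝ, ∀ x : ℝ, |g₁ x| ≤ M) (hb₂ : ∃ M : ℝ, ∀ x : ℝ, |g₂ x| ≤ M)
    (hb₁' : ∃ M : ℝ, ∀ x : ℝ, |deriv g₁ x| ≤ M) (hb₂' : ∃ M : ℝ, ∀ x : ℝ, |deriv g₂ x| ≤ M)
    (hb₁'' : ∃ M : ℝ, ∀ x : ℝ, |deriv (deriv g₁) x| ≤ M)
    (hb₂'' : ∃ M : ℝ, ∀ x : ℝ, |deriv (deriv g₂) x| ≤ M) :
    ∀ C ∈ Set.Ioo (-1 : ℝ) 1,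
      DifferentiableAt ℝ
        (fun C' : ℝ => ∫ z : ℝ × ℝ,
          g₁ (S * z.1 + μ) * g₂ (S * (C' * z.1 + Real.sqrt (1 - C'^2) * z.2) + μ)
          ∂((gaussianReal 0 1).prod (gaussianReal 0 1))) C ∧
      HasDerivAt
        (deriv (fun C' : ℝ => ∫ z : ℝ × ℝ,
          g₁ (S * z.1 + μ) * g₂ (S * (C' * z.1 + Real.sqrt (1 - C'^2) * z.2) + μ)
          ∂((gaussianReal 0 1).prod (gaussianReal 0 1))))
        (S^4 * ∫ z : ℝ × ℝ,
          deriv (deriv g₁) (S * z.1 + μ) *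
            deriv (deriv g₂) (S * (C * z.1 + Real.sqrt (1 - C^2) * z.2) + μ)
          ∂((gaussianReal 0 1).prod (gaussianReal 0 1)))
        C := by
  obtain ⟨M₁, hM₁⟩ := hb₁
  obtain ⟨M₂, hM₂⟩ := hb₂
  obtain ⟨M₃, hM₃⟩ := hb₁'
  obtain ⟨M₄, hM₄⟩ := hb₂'
  obtain ⟨M₅, hM₅⟩ := hb₁''
  obtain ⟨M₆, hM₆⟩ := hb₂''
  set M : ℝ := 1 + |M₁| + |M₂| + |M₃| + |M₄| + |M₅| + |M₆| with hMdef
  have habs : ∀ i : ℝ, i ≤ |i| := fun i => le_abs_self i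
  have hnn : ∀ i : ℝ, 0 ≤ |i| := fun i => abs_nonneg i
  have hM1 : 1 ≤ M := by
    rw [hMdef]
    linarith [hnn M₁, hnn M₂, hnn M₃, hnn M₄, hnn M₅, hnn M₆]
  have b1 : ∀ x, |g₁ x| ≤ M := fun x => (hM₁ x).trans (by
    rw [hMdef]; linarith [habs M₁, hnn M₂, hnn M₃, hnn M₄, hnn M₅, hnn M₆])
  have b2 : ∀ x, |g₂ x| ≤ M := fun x => (hM₂ x).trans (by
    rw [hMdef]; linarith [habs M₂, hnn M₁, hnn M₃, hnn M₄, hnn M₅, hnn M₆])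
  have b3 : ∀ x, |deriv g₁ x| ≤ M := fun x => (hM₃ x).trans (by
    rw [hMdef]; linarith [habs M₃, hnn M₁, hnn M₂, hnn M₄, hnn M₅, hnn M₆])
  have b4 : ∀ x, |deriv g₂ x| ≤ M := fun x => (hM₄ x).trans (by
    rw [hMdef]; linarith [habs M₄, hnn M₁, hnn M₂, hnn M₃, hnn M₅, hnn M₆])
  have b5 : ∀ x, |deriv (deriv g₁) x| ≤ M := fun x => (hM₅ x).trans (by
    rw [hMdef]; linarith [habs M₅, hnn M₁, hnn M₂, hnn M₃, hnn M₄, hnn M₆])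
  have b6 : ∀ x, |deriv (deriv g₂) x| ≤ M := fun x => (hM₆ x).trans (by
    rw [hMdef]; linarith [habs M₆, hnn M₁, hnn M₂, hnn M₃, hnn M₄, hnn M₅])
  have hg₁1 : ContDiff ℝ 1 g₁ := hg₁.of_le (by norm_num)
  have hg₂1 : ContDiff ℝ 1 g₂ := hg₂.of_le (by norm_num)
  have hdg₁ : ContDiff ℝ 1 (deriv g₁) :=
    (contDiff_succ_iff_deriv.mp (hg₁.of_le (by norm_num : (1+1 : WithTop ℕ∞) ≤ 2))).2.2
  have hdg₂ : ContDiff ℝ 1 (deriv g₂) :=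
    (contDiff_succ_iff_deriv.mp (hg₂.of_le (by norm_num : (1+1 : WithTop ℕ∞) ≤ 2))).2.2
  intro C hC
  have hkey1 := key μ S hS g₁ g₂ hg₁1 hg₂1 M hM1 b1 b2 b3 b4 C hC
  refine ⟨hkey1.differentiableAt, ?_⟩
  have hkey2 := key μ S hS (deriv g₁) (deriv g₂) hdg₁ hdg₂ M hM1 b3 b4 b5 b6 C hC
  have heq : deriv (fun C' : ℝ => ∫ z : ℝ × ℝ,
        g₁ (S * z.1 + μ) * g₂ (S * (C' * z.1 + Real.sqrt (1 - C'^2) * z.2) + μ)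
        ∂((gaussianReal 0 1).prod (gaussianReal 0 1))) =ᶠ[nhds C]
      (fun C' : ℝ => S^2 * ∫ z : ℝ × ℝ,
        deriv g₁ (S * z.1 + μ) * deriv g₂ (S * (C' * z.1 + Real.sqrt (1 - C'^2) * z.2) + μ)
        ∂((gaussianReal 0 1).prod (gaussianReal 0 1))) := by
    filter_upwards [isOpen_Ioo.mem_nhds hC] with C' hC'
    exact (key μ S hS g₁ g₂ hg₁1 hg₂1 M hM1 b1 b2 b3 b4 C' hC').deriv
  have h2 := hkey2.const_mul (S^2)
  have h3 := h2.congr_of_eventuallyEq heq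
  rw [show S^4 * (∫ z : ℝ × ℝ,
      deriv (deriv g₁) (S * z.1 + μ) *
        deriv (deriv g₂) (S * (C * z.1 + Real.sqrt (1 - C^2) * z.2) + μ)
      ∂((gaussianReal 0 1).prod (gaussianReal 0 1))) =
    S^2 * (S^2 * ∫ z : ℝ × ℝ,
      deriv (deriv g₁) (S * z.1 + μ) *
        deriv (deriv g₂) (S * (C * z.1 + Real.sqrt (1 - C^2) * z.2) + μ)
      ∂((gaussianReal 0 1).prod (gaussianReal 0 1))) from by ring]
  exact h3
end
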